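/- arXiv:2509.02236 — 8 statements merged into one kernel-verified Lean document; each statement's English description precedes it below -/
import Mathlib

section
/- Let α ≥ 1 be a natural number and 0 < ω < ω* with ω* = 1/(α+1). Then the explicit profile φ(x) = (1 + (ω*/ω − 1)·cosh²(α√ω·x))^{-1/(2α)} solves the one-dimensional stationary quasi-linear Schrödinger equation −ωφ = −(φ'/(1−φ^{2α}))' + α·φ^{2α−1}·(φ')²/(1−φ^{2α})² − φ^{2α+1} on ℝ. -/
/-! With `a = α√ω`, `b = ω*/ω - 1 > 0` and `τ = tanh (a x)`, the profile satisfies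
`φ^(2α) = (1 - τ²) / (1 - τ² + b)` and `φ' = -√ω b τ φ / (1 - τ² + b)`, so the flux
`φ' / (1 - φ^(2α))` is just `-√ω φ τ`, whose derivative is explicit since `tanh' = 1 - tanh²`.
After these substitutions the two sides of the equation differ by
`(1 - τ²) (1 - (α + 1) ω (1 + b)) φ / (1 - τ² + b)`, which vanishes because `ω* = ω (1 + b)`. -/

open Real

theorem Real.one_sub_tanh_sq (x : ℝ) : 1 - tanh x ^ 2 = (cosh x ^ 2)⁻¹ := by
  rw [tanh_eq_sinh_div_cosh, div_pow, one_sub_div (by positivity), cosh_sq_sub_sinh_sq, one_div]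

theorem Real.hasDerivAt_tanh (x : ℝ) : HasDerivAt tanh (1 - tanh x ^ 2) x := by
  have h := (hasDerivAt_sinh x).div (hasDerivAt_cosh x) (cosh_pos x).ne'
  rw [one_sub_tanh_sq, show tanh = sinh / cosh from funext tanh_eq_sinh_div_cosh]
  refine h.congr_deriv ?_
  rw [← sq, ← sq, cosh_sq_sub_sinh_sq, one_div]

lemma inv_one_add_mul_cosh_sq (b x : ℝ) :
    (1 + b * cosh x ^ 2)⁻¹ = (1 - tanh x ^ 2) / (1 - tanh x ^ 2 + b) := by
  have := cosh_pos x
  rw [one_sub_tanh_sq]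
  field_simp

lemma cosh_mul_sinh_div_one_add_mul_cosh_sq (b x : ℝ) :
    cosh x * sinh x / (1 + b * cosh x ^ 2) = tanh x / (1 - tanh x ^ 2 + b) := by
  rw [div_eq_mul_inv, inv_one_add_mul_cosh_sq, one_sub_tanh_sq, tanh_eq_sinh_div_cosh]
  have := cosh_pos x
  field_simp

lemma one_sub_tanh_sq_add_pos {b : ℝ} (hb : 0 < b) (x : ℝ) : 0 < 1 - tanh x ^ 2 + b := by
  linarith [tanh_sq_lt_one x]

noncomputable def coshProfile (α : ℕ) (a b x : ℝ) : ℝ :=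
  (1 + b * cosh (a * x) ^ 2) ^ (-(1 / (2 * (α : ℝ))))

section coshProfile

variable {α : ℕ} {a b : ℝ}

lemma one_add_mul_cosh_sq_pos (hb : 0 ≤ b) (x : ℝ) : 0 < 1 + b * cosh x ^ 2 := by
  positivity

lemma coshProfile_pos (hb : 0 ≤ b) (x : ℝ) : 0 < coshProfile α a b x :=
  rpow_pos_of_pos (one_add_mul_cosh_sq_pos hb _) _

lemma coshProfile_pow_two_mul (hα : α ≠ 0) (hb : 0 ≤ b) (x : ℝ) :
    coshProfile α a b x ^ (2 * α) = (1 - tanh (a * x) ^ 2) / (1 - tanh (a * x) ^ 2 + b) := by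
  rw [coshProfile, ← rpow_natCast, ← rpow_mul (one_add_mul_cosh_sq_pos hb _).le, Nat.cast_mul,
    Nat.cast_two, show -(1 / (2 * (α : ℝ))) * (2 * α) = -1 by field_simp, rpow_neg_one,
    inv_one_add_mul_cosh_sq]

lemma hasDerivAt_coshProfile (hb : 0 ≤ b) (x : ℝ) :
    HasDerivAt (coshProfile α a b)
      (-(a * b / α) * tanh (a * x) * coshProfile α a b x / (1 - tanh (a * x) ^ 2 + b)) x := by
  have hu : HasDerivAt (fun y => 1 + b * cosh (a * y) ^ 2)
      (b * (2 * cosh (a * x) * (sinh (a * x) * a))) x := by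
    have := ((hasDerivAt_cosh (a * x)).comp x ((hasDerivAt_id x).const_mul a)).pow 2
    simpa using (this.const_mul b).const_add 1
  have hupos := one_add_mul_cosh_sq_pos hb (a * x)
  refine (hu.rpow_const (p := -(1 / (2 * (α : ℝ)))) (Or.inl hupos.ne')).congr_deriv ?_
  rw [rpow_sub_one hupos.ne', coshProfile]
  linear_combination (-(a * b / α) * (1 + b * cosh (a * x) ^ 2) ^ (-(1 / (2 * (α : ℝ)))))
    * cosh_mul_sinh_div_one_add_mul_cosh_sq b (a * x)

lemma coshProfile_flux (hα : α ≠ 0) (hb : 0 < b) (x : ℝ) :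
    deriv (coshProfile α a b) x / (1 - coshProfile α a b x ^ (2 * α))
      = -(a / α) * (coshProfile α a b x * tanh (a * x)) := by
  have hD := one_sub_tanh_sq_add_pos hb (a * x)
  rw [(hasDerivAt_coshProfile hb.le x).deriv, coshProfile_pow_two_mul hα hb.le, one_sub_div hD.ne',
    add_sub_cancel_left]
  field_simp

lemma hasDerivAt_coshProfile_flux (hb : 0 ≤ b) (x : ℝ) :
    HasDerivAt (fun y => -(a / α) * (coshProfile α a b y * tanh (a * y)))
      (-(a / α) * (-(a * b / α) * tanh (a * x) * coshProfile α a b x / (1 - tanh (a * x) ^ 2 + b)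
        * tanh (a * x) + coshProfile α a b x * ((1 - tanh (a * x) ^ 2) * a))) x := by
  have hax : HasDerivAt (fun y => a * y) a x := by simpa using (hasDerivAt_id x).const_mul a
  have htanh : HasDerivAt (fun y => tanh (a * y)) ((1 - tanh (a * x) ^ 2) * a) x :=
    (hasDerivAt_tanh (a * x)).comp x hax
  exact ((hasDerivAt_coshProfile hb x).mul htanh).const_mul _

end coshProfile

lemma quasilinear_equation_tanh_identity (α k b ω τ v : ℝ) (hα : α ≠ 0) (hb : b ≠ 0)
    (hD : 1 - τ ^ 2 + b ≠ 0) (hk : k ^ 2 = ω) (hrel : (α + 1) * ω * (1 + b) = 1) :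
    -ω * v =
      -(-(α * k / α) * (-(α * k * b / α) * τ * v / (1 - τ ^ 2 + b) * τ + v * ((1 - τ ^ 2) * (α * k))))
        + α * ((1 - τ ^ 2) / (1 - τ ^ 2 + b) * v⁻¹) * (-(α * k * b / α) * τ * v / (1 - τ ^ 2 + b)) ^ 2
          / (1 - (1 - τ ^ 2) / (1 - τ ^ 2 + b)) ^ 2
        - (1 - τ ^ 2) / (1 - τ ^ 2 + b) * v := by
  subst hk
  rw [one_sub_div hD, add_sub_cancel_left]
  linear_combination (norm := skip) (-(1 - τ ^ 2) * v / (1 - τ ^ 2 + b)) * hrel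
  field_simp
  ring

theorem stmt2 (α : ℕ) (hα : 1 ≤ α) (ω : ℝ) (hω : 0 < ω) (hωs : ω < 1 / ((α : ℝ) + 1))
    (φ : ℝ → ℝ)
    (hφ : ∀ x : ℝ, φ x =
      (1 + ((1 / ((α : ℝ) + 1)) / ω - 1) * Real.cosh ((α : ℝ) * Real.sqrt ω * x) ^ 2)
        ^ (-(1 / (2 * (α : ℝ))))) :
    ∀ x : ℝ,
      -ω * φ x =
        -(deriv (fun y => deriv φ y / (1 - φ y ^ (2 * α))) x)
          + (α : ℝ) * φ x ^ (2 * α - 1) * (deriv φ x) ^ 2 / (1 - φ x ^ (2 * α)) ^ 2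
          - φ x ^ (2 * α + 1) := by
  intro x
  set b := 1 / ((α : ℝ) + 1) / ω - 1 with hb_def
  have hα0 : α ≠ 0 := by omega
  have hb : 0 < b := sub_pos.2 ((one_lt_div hω).2 hωs)
  have hrel : ((α : ℝ) + 1) * ω * (1 + b) = 1 := by
    rw [hb_def]
    field_simp
    ring
  obtain rfl : φ = coshProfile α (α * √ω) b := funext hφ
  have hv : 0 < coshProfile α (α * √ω) b x := coshProfile_pos hb.le x
  rw [funext (coshProfile_flux hα0 hb), (hasDerivAt_coshProfile_flux hb.le x).deriv,
    (hasDerivAt_coshProfile hb.le x).deriv, pow_sub₀ _ hv.ne' (by omega), pow_one,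
    pow_succ _ (2 * α), coshProfile_pow_two_mul hα0 hb.le]
  exact quasilinear_equation_tanh_identity _ _ _ _ _ _ (Nat.cast_ne_zero.2 hα0) hb.ne'
    (one_sub_tanh_sq_add_pos hb _).ne' (sq_sqrt hω.le) hrel
end

section
/- Let α ≥ 1, ω* = 1/(α+1), and 0 < ω < ω*. Then the L² mass of the one-dimensional solitary wave satisfies ∫_ℝ φ_ω(x)² dx = (2/α)·ω^{1/α − 1/2}·(ω*)^{-1/α}·∫_0^∞ (1 + z²)^{-1/α}·((1 − ω/ω*) + z²)^{-1/2} dz. -/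
open Real MeasureTheory Set

theorem stmt3 (α : ℕ) (hα : 1 ≤ α) (ω : ℝ) (hω : 0 < ω) (hωs : ω < 1 / ((α : ℝ) + 1))
    (φ : ℝ → ℝ)
    (hφ : ∀ x : ℝ, φ x =
      (1 + ((1 / ((α : ℝ) + 1)) / ω - 1) * Real.cosh ((α : ℝ) * Real.sqrt ω * x) ^ 2)
        ^ (-(1 / (2 * (α : ℝ))))) :
    ∫ x : ℝ, (φ x) ^ 2 =
      (2 / (α : ℝ)) * ω ^ (1 / (α : ℝ) - 1 / 2) * (1 / ((α : ℝ) + 1)) ^ (-(1 / (α : ℝ))) *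
        ∫ z in Set.Ioi (0 : ℝ),
          (1 + z ^ 2) ^ (-(1 / (α : ℝ))) *
            ((1 - ω / (1 / ((α : ℝ) + 1))) + z ^ 2) ^ (-(1 / 2 : ℝ)) := by
  have hαR : (0:ℝ) < (α:ℝ) := by exact_mod_cast Nat.lt_of_lt_of_le Nat.zero_lt_one hα
  have hα1 : (0:ℝ) < (α:ℝ) + 1 := by positivity
  set a : ℝ := (α:ℝ) * Real.sqrt ω with ha_def
  have ha : 0 < a := mul_pos hαR (Real.sqrt_pos.mpr hω)
  set k : ℝ := (1 / ((α : ℝ) + 1)) / ω - 1 with hk_def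
  set c : ℝ := 1 - ω * ((α:ℝ) + 1) with hc_def
  have hωα1 : ω * ((α:ℝ)+1) < 1 := by
    rw [← lt_div_iff₀ hα1]; linarith [hωs]
  have hc : 0 < c := by simp only [hc_def]; linarith
  have hk : 0 < k := by
    have : 1 < (1 / ((α : ℝ) + 1)) / ω := by
      rw [lt_div_iff₀ hω, one_mul, lt_div_iff₀ hα1]; linarith
    simp only [hk_def]; linarith
  have hkrel : ω * ((α:ℝ)+1) * k = c := by
    simp only [hk_def, hc_def]; field_simp
  have hcm : 1 - ω / (1 / ((α : ℝ) + 1)) = c := by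
    simp only [hc_def]; field_simp
  have hbase : ∀ t : ℝ, 0 < 1 + k * Real.cosh t ^ 2 := fun t =>
    lt_add_of_lt_of_nonneg one_pos (le_of_lt (mul_pos hk (pow_pos (Real.cosh_pos t) 2)))
  -- g is the x-side integrand
  set g : ℝ → ℝ := fun x => (1 + k * Real.cosh (a * x) ^ 2) ^ (-(1 / (α:ℝ))) with hg_def
  -- Step 1 : φ x ^ 2 = g x
  have hφ2 : ∀ x : ℝ, φ x ^ 2 = g x := by
    intro x
    rw [hφ x, hg_def]
    rw [← Real.rpow_natCast ((1 + k * Real.cosh (a * x) ^ 2) ^ (-(1 / (2 * (α:ℝ))))) 2,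
      ← Real.rpow_mul (hbase (a * x)).le]
    congr 1
    push_cast
    field_simp
  -- Step 2 : evenness
  have hcoshabs : ∀ x : ℝ, Real.cosh (a * |x|) = Real.cosh (a * x) := by
    intro x
    rw [← Real.cosh_abs (a * x), abs_mul, abs_of_nonneg ha.le]
  have heven : ∫ x : ℝ, g x = 2 * ∫ x in Set.Ioi (0:ℝ), g x := by
    rw [← integral_comp_abs (f := g)]
    refine integral_congr_ae (Filter.Eventually.of_forall fun x => ?_)
    simp only [hg_def, hcoshabs]
  -- Step 3 : substitution z = sqrt c * sinh (a x)
  set F : ℝ → ℝ := fun x => Real.sqrt c * Real.sinh (a * x) with hF_def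
  set F' : ℝ → ℝ := fun x => Real.sqrt c * (Real.cosh (a * x) * (a * 1)) with hF'_def
  have hFmono : StrictMono F := by
    intro x y hxy
    exact mul_lt_mul_of_pos_left
      (Real.sinh_lt_sinh.mpr (mul_lt_mul_of_pos_left hxy ha)) (Real.sqrt_pos.mpr hc)
  have hF0 : F 0 = 0 := by simp [hF_def]
  have himg : F '' Set.Ioi (0:ℝ) = Set.Ioi (0:ℝ) := by
    ext z
    constructor
    · rintro ⟨x, hx, rfl⟩
      have := hFmono (Set.mem_Ioi.mp hx)
      rw [hF0] at this
      exact this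
    · intro hz
      refine ⟨Real.arsinh (z / Real.sqrt c) / a, ?_, ?_⟩
      · have hzc : 0 < z / Real.sqrt c := div_pos hz (Real.sqrt_pos.mpr hc)
        exact div_pos (Real.arsinh_pos_iff.mpr hzc) ha
      · simp only [hF_def]
        rw [mul_div_cancel₀ _ ha.ne', Real.sinh_arsinh,
          mul_div_cancel₀ _ (Real.sqrt_pos.mpr hc).ne']
  have hderiv : ∀ x ∈ Set.Ioi (0:ℝ), HasDerivWithinAt F (F' x) (Set.Ioi (0:ℝ)) x := by
    intro x _
    exact (((hasDerivAt_id x).const_mul a).sinh.const_mul (Real.sqrt c)).hasDerivWithinAt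
  set h : ℝ → ℝ := fun z =>
    (1 + z ^ 2) ^ (-(1 / (α:ℝ))) * (c + z ^ 2) ^ (-(1 / 2 : ℝ)) with hh_def
  have hsub : ∫ z in Set.Ioi (0:ℝ), h z
      = ∫ x in Set.Ioi (0:ℝ), |F' x| • h (F x) := by
    have := MeasureTheory.integral_image_eq_integral_abs_deriv_smul measurableSet_Ioi hderiv
      hFmono.injective.injOn h
    rwa [himg] at this
  -- Step 4 : pointwise identity
  have hωα1pos : 0 < ω * ((α:ℝ)+1) := mul_pos hω hα1
  have hpt : ∀ x : ℝ, |F' x| • h (F x)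
      = (a * (ω * ((α:ℝ)+1)) ^ (-(1 / (α:ℝ)))) * g x := by
    intro x
    have hch : 0 < Real.cosh (a * x) := Real.cosh_pos (a * x)
    have hch2 := Real.cosh_sq (a * x)
    have hsq : (Real.sqrt c * Real.sinh (a * x)) ^ 2 = c * Real.sinh (a * x) ^ 2 := by
      rw [mul_pow, Real.sq_sqrt hc.le]
    have h1 : 1 + (Real.sqrt c * Real.sinh (a * x)) ^ 2
        = (ω * ((α:ℝ)+1)) * (1 + k * Real.cosh (a * x) ^ 2) := by
      rw [hsq]
      linear_combination (-(Real.sinh (a*x) ^ 2 + 1)) * hkrel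
        + (-(ω * ((α:ℝ)+1) * k)) * hch2 + (-1 : ℝ) * hc_def
    have h2 : c + (Real.sqrt c * Real.sinh (a * x)) ^ 2 = c * Real.cosh (a * x) ^ 2 := by
      rw [hsq]
      linear_combination (-c) * hch2
    have habs : |F' x| = Real.sqrt c * (Real.cosh (a * x) * a) := by
      rw [hF'_def, mul_one,
        abs_of_pos (mul_pos (Real.sqrt_pos.mpr hc) (mul_pos hch ha))]
    have hr1 : (1 + (Real.sqrt c * Real.sinh (a * x)) ^ 2) ^ (-(1 / (α:ℝ)))
        = (ω * ((α:ℝ)+1)) ^ (-(1 / (α:ℝ)))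
          * (1 + k * Real.cosh (a * x) ^ 2) ^ (-(1 / (α:ℝ))) := by
      rw [h1, Real.mul_rpow hωα1pos.le (hbase (a * x)).le]
    have hr2 : (c + (Real.sqrt c * Real.sinh (a * x)) ^ 2) ^ (-(1 / 2 : ℝ))
        = c ^ (-(1 / 2 : ℝ)) * (Real.cosh (a * x))⁻¹ := by
      rw [h2, Real.mul_rpow hc.le (pow_nonneg hch.le 2)]
      congr 1
      rw [← Real.rpow_natCast (Real.cosh (a * x)) 2, ← Real.rpow_mul hch.le]
      norm_num [Real.rpow_neg_one]
    have hcc : Real.sqrt c * c ^ (-(1 / 2 : ℝ)) = 1 := by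
      rw [Real.sqrt_eq_rpow, ← Real.rpow_add hc]
      norm_num
    have hchinv : Real.cosh (a * x) * (Real.cosh (a * x))⁻¹ = 1 :=
      mul_inv_cancel₀ hch.ne'
    simp only [hF_def, hh_def, hg_def, smul_eq_mul]
    rw [habs, hr1, hr2]
    calc Real.sqrt c * (Real.cosh (a * x) * a) *
          ((ω * ((α:ℝ)+1)) ^ (-(1 / (α:ℝ)))
              * (1 + k * Real.cosh (a * x) ^ 2) ^ (-(1 / (α:ℝ)))
            * (c ^ (-(1 / 2 : ℝ)) * (Real.cosh (a * x))⁻¹))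
        = (Real.sqrt c * c ^ (-(1 / 2 : ℝ)))
            * (Real.cosh (a * x) * (Real.cosh (a * x))⁻¹)
            * (a * ((ω * ((α:ℝ)+1)) ^ (-(1 / (α:ℝ)))
                * (1 + k * Real.cosh (a * x) ^ 2) ^ (-(1 / (α:ℝ))))) := by ring
      _ = a * (ω * ((α:ℝ)+1)) ^ (-(1 / (α:ℝ)))
            * (1 + k * Real.cosh (a * x) ^ 2) ^ (-(1 / (α:ℝ))) := by
          rw [hcc, hchinv]; ring
  have hsub2 : ∫ z in Set.Ioi (0:ℝ), h z
      = (a * (ω * ((α:ℝ)+1)) ^ (-(1 / (α:ℝ)))) * ∫ x in Set.Ioi (0:ℝ), g x := by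
    rw [hsub, ← MeasureTheory.integral_const_mul]
    exact setIntegral_congr_fun measurableSet_Ioi fun x _ => hpt x
  -- Step 5 : final algebra
  have A1 : (1 / ((α : ℝ) + 1)) ^ (-(1 / (α : ℝ))) = ((α:ℝ)+1) ^ (1 / (α:ℝ)) := by
    rw [one_div, ← Real.rpow_neg_one ((α:ℝ)+1), ← Real.rpow_mul hα1.le]
    norm_num
  have A2 : (ω * ((α:ℝ)+1)) ^ (-(1 / (α:ℝ)))
      = ω ^ (-(1 / (α:ℝ))) * ((α:ℝ)+1) ^ (-(1 / (α:ℝ))) :=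
    Real.mul_rpow hω.le hα1.le
  have A3 : ((α:ℝ)+1) ^ (1 / (α:ℝ)) * ((α:ℝ)+1) ^ (-(1 / (α:ℝ))) = 1 := by
    rw [← Real.rpow_add hα1, add_neg_cancel, Real.rpow_zero]
  have A4 : ω ^ (1 / (α:ℝ) - 1 / 2) * (ω ^ (1 / 2 : ℝ) * ω ^ (-(1 / (α:ℝ)))) = 1 := by
    rw [← Real.rpow_add hω, ← Real.rpow_add hω,
      show 1 / (α:ℝ) - 1 / 2 + (1 / 2 + -(1 / (α:ℝ))) = 0 by ring, Real.rpow_zero]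
  have hconst : (2 / (α : ℝ)) * ω ^ (1 / (α : ℝ) - 1 / 2) * (1 / ((α : ℝ) + 1)) ^ (-(1 / (α : ℝ)))
      * (a * (ω * ((α:ℝ)+1)) ^ (-(1 / (α:ℝ)))) = 2 := by
    rw [A1, A2, ha_def, Real.sqrt_eq_rpow]
    calc 2 / (α:ℝ) * ω ^ (1 / (α:ℝ) - 1 / 2) * ((α:ℝ)+1) ^ (1 / (α:ℝ)) *
          ((α:ℝ) * ω ^ (1 / 2 : ℝ) * (ω ^ (-(1 / (α:ℝ))) * ((α:ℝ)+1) ^ (-(1 / (α:ℝ)))))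
        = (2 / (α:ℝ) * (α:ℝ))
            * (ω ^ (1 / (α:ℝ) - 1 / 2) * (ω ^ (1 / 2 : ℝ) * ω ^ (-(1 / (α:ℝ)))))
            * (((α:ℝ)+1) ^ (1 / (α:ℝ)) * ((α:ℝ)+1) ^ (-(1 / (α:ℝ)))) := by ring
      _ = 2 := by rw [A3, A4, div_mul_cancel₀ 2 hαR.ne']; ring
  calc ∫ x : ℝ, (φ x) ^ 2 = ∫ x : ℝ, g x :=
        integral_congr_ae (Filter.Eventually.of_forall fun x => hφ2 x)
    _ = 2 * ∫ x in Set.Ioi (0:ℝ), g x := heven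
    _ = (2 / (α : ℝ)) * ω ^ (1 / (α : ℝ) - 1 / 2) * (1 / ((α : ℝ) + 1)) ^ (-(1 / (α : ℝ))) *
        ∫ z in Set.Ioi (0 : ℝ),
          (1 + z ^ 2) ^ (-(1 / (α : ℝ))) *
            ((1 - ω / (1 / ((α : ℝ) + 1))) + z ^ 2) ^ (-(1 / 2 : ℝ)) := by
        have hEq : ∫ z in Set.Ioi (0 : ℝ),
            (1 + z ^ 2) ^ (-(1 / (α : ℝ))) *
              ((1 - ω / (1 / ((α : ℝ) + 1))) + z ^ 2) ^ (-(1 / 2 : ℝ))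
            = ∫ z in Set.Ioi (0:ℝ), h z := by
          simp only [hh_def, hcm]
        rw [hEq, hsub2, ← mul_assoc, hconst]
end

section
/- Let M(ω) = (1/α)·ω^{1/α − 1/2}·(ω*)^{-1/α}·∫_0^∞ (1+z²)^{-1/α}·((1 − ω/ω*) + z²)^{-1/2} dz with ω* = 1/(α+1). If α ≥ 1 and α < 2, then M(ω) → 0 as ω → 0⁺. -/
open Real MeasureTheory Set Filter Topology

theorem stmt5 (α : ℕ) (hα : 1 ≤ α) (hα2 : α < 2) :
    Tendsto
      (fun ω : ℝ =>
        (1 / (α : ℝ)) * ω ^ (1 / (α : ℝ) - 1 / 2) * (1 / ((α : ℝ) + 1)) ^ (-(1 / (α : ℝ))) *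
          ∫ z in Set.Ioi (0 : ℝ),
            (1 + z ^ 2) ^ (-(1 / (α : ℝ))) *
              ((1 - ω / (1 / ((α : ℝ) + 1))) + z ^ 2) ^ (-(1 / 2 : ℝ)))
      (𝓝[>] (0 : ℝ)) (𝓝 0) := by
  have hα1 : α = 1 := by omega
  subst hα1
  simp only [Nat.cast_one]
  set C : ℝ := ∫ z in Set.Ioi (0 : ℝ), Real.sqrt 2 * (1 + z ^ 2)⁻¹ with hC
  have hg : Integrable (fun z : ℝ => Real.sqrt 2 * (1 + z ^ 2)⁻¹)
      (volume.restrict (Set.Ioi (0 : ℝ))) :=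
    (integrable_inv_one_add_sq.const_mul (Real.sqrt 2)).restrict
  have hCnn : 0 ≤ C := by
    apply integral_nonneg
    intro z
    positivity
  have hmem : Set.Ioo (0:ℝ) (1/4) ∈ 𝓝[>] (0:ℝ) :=
    Ioo_mem_nhdsGT_of_mem ⟨le_refl _, by norm_num⟩
  have hdiv : ∀ ω : ℝ, ω / ((1:ℝ) / (1 + 1)) = 2 * ω := by intro ω; ring
  have e1 : ((1:ℝ)/(1+1)) ^ (-(1/(1:ℝ))) = 2 := by
    rw [show -(1/(1:ℝ)) = (-1 : ℝ) by norm_num, Real.rpow_neg_one]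
    norm_num
  have e2 : ∀ z : ℝ, ((1:ℝ) + z ^ 2) ^ (-(1/(1:ℝ))) = (1 + z ^ 2)⁻¹ := by
    intro z
    rw [show -(1/(1:ℝ)) = (-1 : ℝ) by norm_num, Real.rpow_neg_one]
  have e3 : ((1:ℝ)/2) ^ (-(1/2:ℝ)) = Real.sqrt 2 := by
    rw [one_div, Real.inv_rpow (by norm_num : (0:ℝ) ≤ 2),
      Real.rpow_neg (by norm_num : (0:ℝ) ≤ 2), inv_inv, Real.sqrt_eq_rpow]
    norm_num
  apply squeeze_zero' (g := fun ω : ℝ => ω ^ ((1:ℝ)/2) * (2 * C))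
  · filter_upwards [hmem] with ω hω
    have hω0 : (0:ℝ) < ω := hω.1
    have h1 : (0:ℝ) ≤ (1/(1:ℝ)) * ω ^ (1 / (1 : ℝ) - 1 / 2) * (1 / ((1:ℝ) + 1)) ^ (-(1 / (1:ℝ))) := by
      positivity
    apply mul_nonneg h1
    apply integral_nonneg
    intro z
    have hb : (0:ℝ) ≤ 1 - ω / (1/(1+1)) + z ^ 2 := by
      rw [hdiv]; nlinarith [sq_nonneg z, hω.2]
    exact mul_nonneg (Real.rpow_nonneg (by positivity) _) (Real.rpow_nonneg hb _)
  · filter_upwards [hmem] with ω hω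
    have hω0 : (0:ℝ) < ω := hω.1
    have hI : (∫ z in Set.Ioi (0:ℝ),
        (1 + z ^ 2) ^ (-(1/(1:ℝ))) * ((1 - ω / (1/((1:ℝ)+1))) + z ^ 2) ^ (-(1/2:ℝ))) ≤ C := by
      apply integral_mono_of_nonneg (Eventually.of_forall ?_) hg (Eventually.of_forall ?_)
      · intro z
        have hb : (0:ℝ) ≤ 1 - ω / (1/(1+1)) + z ^ 2 := by
          rw [hdiv]; nlinarith [sq_nonneg z, hω.2]
        exact mul_nonneg (Real.rpow_nonneg (by positivity) _) (Real.rpow_nonneg hb _)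
      · intro z
        have hb2 : ((1:ℝ)/2) ≤ 1 - ω / (1/(1+1)) + z ^ 2 := by
          rw [hdiv]; nlinarith [sq_nonneg z, hω.2]
        have h2 : ((1 - ω / (1/((1:ℝ)+1))) + z ^ 2) ^ (-(1/2:ℝ)) ≤ Real.sqrt 2 := by
          rw [← e3]
          exact Real.rpow_le_rpow_of_nonpos (by norm_num) hb2 (by norm_num)
        rw [e2 z, mul_comm]
        exact mul_le_mul_of_nonneg_right h2 (by positivity)
    rw [e1]
    have hω2 : (0:ℝ) ≤ ω ^ ((1:ℝ)/2) := Real.rpow_nonneg hω0.le _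
    calc (1/(1:ℝ)) * ω ^ (1/(1:ℝ) - 1/2) * 2 * (∫ z in Set.Ioi (0:ℝ),
            (1 + z ^ 2) ^ (-(1/(1:ℝ))) * ((1 - ω / (1/((1:ℝ)+1))) + z ^ 2) ^ (-(1/2:ℝ)))
        ≤ (1/(1:ℝ)) * ω ^ (1/(1:ℝ) - 1/2) * 2 * C := by
          apply mul_le_mul_of_nonneg_left hI
          positivity
      _ = ω ^ ((1:ℝ)/2) * (2 * C) := by
          rw [show (1/(1:ℝ) - 1/2) = (1:ℝ)/2 by norm_num]; ring
  · have h0 : Tendsto (fun ω : ℝ => ω ^ ((1:ℝ)/2)) (𝓝[>] 0) (𝓝 0) := by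
      have h := (Real.continuousAt_rpow_const 0 (1/2) (Or.inr (by norm_num))).tendsto
      rw [Real.zero_rpow (by norm_num)] at h
      exact h.mono_left nhdsWithin_le_nhds
    simpa using h0.mul_const (2*C)
end

section
/- Let α be a natural number with α > 2 and M(ω) = (1/α)·ω^{1/α − 1/2}·(ω*)^{-1/α}·∫_0^∞ (1+z²)^{-1/α}·((1 − ω/ω*) + z²)^{-1/2} dz with ω* = 1/(α+1). Then M(ω) → +∞ as ω → 0⁺. -/
open Real MeasureTheory Set Filter Topology

lemma integrable_aux {p : ℝ} (hp : 1/2 < p) :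
    IntegrableOn (fun z : ℝ => (1 + z ^ 2) ^ (-p)) (Ioi 0) := by
  have hcont : Continuous (fun z : ℝ => (1 + z ^ 2) ^ (-p)) := by
    apply Continuous.rpow_const (by continuity)
    intro x; left; positivity
  have h1 : IntegrableOn (fun z : ℝ => (1 + z ^ 2) ^ (-p)) (Ioc 0 1) :=
    (hcont.continuousOn.integrableOn_compact isCompact_Icc).mono_set Ioc_subset_Icc_self
  have h2 : IntegrableOn (fun z : ℝ => (1 + z ^ 2) ^ (-p)) (Ioi 1) := by
    apply (integrableOn_Ioi_rpow_of_lt (a := -(2*p)) (by linarith) zero_lt_one).mono'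
      hcont.aestronglyMeasurable.restrict
    filter_upwards [ae_restrict_mem measurableSet_Ioi] with x hx
    have hx1 : (1:ℝ) < x := hx
    rw [Real.norm_eq_abs, abs_of_nonneg (rpow_nonneg (by positivity) _)]
    calc (1 + x ^ 2) ^ (-p) ≤ (x ^ 2) ^ (-p) := by
          apply rpow_le_rpow_of_nonpos (by positivity) (by linarith) (by linarith)
      _ = x ^ (-(2*p)) := by
          rw [← rpow_natCast x 2, ← rpow_mul (by linarith)]; ring_nf
  have := h1.union h2
  rwa [Ioc_union_Ioi_eq_Ioi zero_le_one] at this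

theorem stmt6 (α : ℕ) (hα : 2 < α) :
    Tendsto
      (fun ω : ℝ =>
        (1 / (α : ℝ)) * ω ^ (1 / (α : ℝ) - 1 / 2) * (1 / ((α : ℝ) + 1)) ^ (-(1 / (α : ℝ))) *
          ∫ z in Set.Ioi (0 : ℝ),
            (1 + z ^ 2) ^ (-(1 / (α : ℝ))) *
              ((1 - ω / (1 / ((α : ℝ) + 1))) + z ^ 2) ^ (-(1 / 2 : ℝ)))
      (𝓝[>] (0 : ℝ)) atTop := by
  have hα3 : (3:ℝ) ≤ (α : ℝ) := by exact_mod_cast hα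
  set a : ℝ := 1 / (α : ℝ) with ha
  have hαpos : (0:ℝ) < α := by linarith
  have hapos : 0 < a := by positivity
  have halt : a < 1/2 := by
    rw [ha, div_lt_div_iff₀ hαpos (by norm_num)]; linarith
  have hp : 1/2 < a + 1/2 := by linarith
  set C := ∫ z in Ioi (0:ℝ), (1 + z ^ 2) ^ (-(a + 1/2)) with hCdef
  have hint : IntegrableOn (fun z : ℝ => (1 + z ^ 2) ^ (-(a + 1/2))) (Ioi 0) :=
    integrable_aux hp
  have hC : 0 < C := by
    rw [hCdef]
    rw [setIntegral_pos_iff_support_of_nonneg_ae]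
    · have hsupp : Function.support (fun z : ℝ => (1 + z ^ 2) ^ (-(a + 1/2))) = univ := by
        ext z; simp only [Function.mem_support, mem_univ, iff_true]
        positivity
      rw [hsupp, univ_inter]
      exact Measure.measure_Ioi_pos _ 0
    · filter_upwards with z
      positivity
    · exact hint
  set ωs : ℝ := 1 / ((α : ℝ) + 1) with hωs
  have hωspos : 0 < ωs := by positivity
  set K : ℝ := (1 / (α : ℝ)) * ωs ^ (-a) * C with hK
  have hKpos : 0 < K := by
    apply mul_pos (mul_pos (by positivity) _) hC
    exact rpow_pos_of_pos hωspos _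
  have htend : Tendsto (fun ω : ℝ => K * ω ^ (a - 1/2)) (𝓝[>] (0:ℝ)) atTop := by
    apply Tendsto.const_mul_atTop hKpos
    have h1 : Tendsto (fun ω : ℝ => (ω⁻¹) ^ (1/2 - a)) (𝓝[>] (0:ℝ)) atTop :=
      (tendsto_rpow_atTop (by linarith : (0:ℝ) < 1/2 - a)).comp tendsto_inv_nhdsGT_zero
    apply h1.congr'
    filter_upwards [self_mem_nhdsWithin] with ω (hω : 0 < ω)
    rw [← rpow_neg_one ω, ← rpow_mul hω.le]
    ring_nf
  apply tendsto_atTop_mono' _ _ htend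
  filter_upwards [Ioo_mem_nhdsGT hωspos] with ω hω
  obtain ⟨hω0, hω1⟩ := hω
  set E : ℝ := 1 - ω / ωs with hE
  have hEpos : 0 < E := by
    rw [hE]
    have : ω / ωs < 1 := (div_lt_one hωspos).mpr hω1
    linarith
  have hEle : E ≤ 1 := by
    rw [hE]
    have : 0 < ω / ωs := div_pos hω0 hωspos
    linarith
  have key : ∀ z : ℝ, (0:ℝ) < E + z ^ 2 := fun z => by positivity
  -- integrability of the actual integrand
  have hgint : IntegrableOn
      (fun z : ℝ => (1 + z ^ 2) ^ (-a) * (E + z ^ 2) ^ (-(1/2 : ℝ))) (Ioi 0) := by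
    have hcont : Continuous
        (fun z : ℝ => (1 + z ^ 2) ^ (-a) * (E + z ^ 2) ^ (-(1/2 : ℝ))) := by
      apply Continuous.mul
      · apply Continuous.rpow_const (by continuity); intro x; left; positivity
      · apply Continuous.rpow_const (by continuity); intro x; left; exact (key x).ne'
    apply (hint.const_mul (E ^ (-(1/2:ℝ)))).mono' hcont.aestronglyMeasurable.restrict
    filter_upwards with z
    have h1z : (0:ℝ) < 1 + z ^ 2 := by positivity
    rw [Real.norm_eq_abs, abs_of_nonneg (by positivity)]
    have hEz : E * (1 + z ^ 2) ≤ E + z ^ 2 := by nlinarith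
    calc (1 + z ^ 2) ^ (-a) * (E + z ^ 2) ^ (-(1/2:ℝ))
        ≤ (1 + z ^ 2) ^ (-a) * (E * (1 + z ^ 2)) ^ (-(1/2:ℝ)) := by
          apply mul_le_mul_of_nonneg_left _ (rpow_nonneg h1z.le _)
          exact rpow_le_rpow_of_nonpos (by positivity) hEz (by norm_num)
      _ = E ^ (-(1/2:ℝ)) * (1 + z ^ 2) ^ (-(a + 1/2)) := by
          rw [mul_rpow hEpos.le h1z.le, neg_add, rpow_add h1z]; ring
  -- lower bound on the integral
  have hIC : C ≤ ∫ z in Ioi (0:ℝ),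
      (1 + z ^ 2) ^ (-a) * (E + z ^ 2) ^ (-(1/2 : ℝ)) := by
    rw [hCdef]
    apply setIntegral_mono_on hint hgint measurableSet_Ioi
    intro z _
    have h1z : (0:ℝ) < 1 + z ^ 2 := by positivity
    rw [neg_add, rpow_add h1z]
    apply mul_le_mul_of_nonneg_left _ (rpow_nonneg h1z.le _)
    exact rpow_le_rpow_of_nonpos (key z) (by nlinarith) (by norm_num)
  calc K * ω ^ (a - 1/2)
      = (1/(α:ℝ)) * ω ^ (a - 1/2) * ωs ^ (-a) * C := by rw [hK]; ring
    _ ≤ (1/(α:ℝ)) * ω ^ (a - 1/2) * ωs ^ (-a) *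
        ∫ z in Ioi (0:ℝ), (1 + z ^ 2) ^ (-a) * (E + z ^ 2) ^ (-(1/2 : ℝ)) := by
        apply mul_le_mul_of_nonneg_left hIC
        have := rpow_pos_of_pos hω0 (a - 1/2)
        have := rpow_pos_of_pos hωspos (-a)
        positivity
    _ = _ := rfl
end

section
/- Let α ≥ 1 and ω* = 1/(α+1), and M(ω) = (2/α)·ω^{1/α−1/2}·(ω*)^{-1/α}·∫_0^∞ (1+z²)^{-1/α}·((1−ω/ω*)+z²)^{-1/2} dz. Then M(ω)/(−ln(ω* − ω)) → 1/(α√ω*) as ω → (ω*)⁻; in particular M(ω) → +∞ as ω → (ω*)⁻. -/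
open Real MeasureTheory Set Filter Topology Asymptotics

/-!
Write `ε = 1 - ω/ω* = (α+1)(ω* - ω)`. On `(0, 1]` the factor `(1+z²)^{-1/α}` lies between
`1 - z²` and `1`, so it changes `∫₀¹ (ε+z²)^{-1/2} dz = arsinh ε^{-1/2}` by at most `1/2`; on
`(1, ∞)` the integrand is dominated by `z^{-1-2/α}` uniformly in `ε`. As
`arsinh ε^{-1/2} = -(1/2) log ε + O(1)`, the integral is `-(1/2) log (ω* - ω) + O(1)`, while the
prefactor tends to `(2/α) (ω*)^{-1/2}`.
-/

lemma continuous_rpow_const_add_sq {c : ℝ} (hc : 0 < c) (p : ℝ) :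
    Continuous fun z : ℝ => (c + z ^ 2) ^ p :=
  (continuous_const.add (continuous_pow 2)).rpow_const fun z =>
    Or.inl (add_pos_of_pos_of_nonneg hc (sq_nonneg z)).ne'

lemma log_le_arsinh {x : ℝ} (hx : 0 < x) : log x ≤ arsinh x :=
  log_le_log hx (by linarith [sqrt_nonneg (1 + x ^ 2)])

lemma arsinh_le_log_three_add_log {x : ℝ} (hx : 1 ≤ x) : arsinh x ≤ log 3 + log x := by
  have hsqrt : √(1 + x ^ 2) ≤ 2 * x := by
    rw [sqrt_le_left (by linarith)]
    nlinarith
  rw [← log_mul (by norm_num) (by positivity), arsinh]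
  exact log_le_log (by positivity) (by linarith)

lemma integral_Ioc_zero_one_rpow_add_sq_neg_half {ε : ℝ} (hε : 0 < ε) :
    ∫ z in Ioc (0 : ℝ) 1, (ε + z ^ 2) ^ (-(1 / 2 : ℝ)) = arsinh (√ε)⁻¹ := by
  have hderiv (z : ℝ) :
      HasDerivAt (fun z => arsinh (z / √ε)) ((ε + z ^ 2) ^ (-(1 / 2 : ℝ))) z := by
    refine ((hasDerivAt_id z).div_const √ε).arsinh.congr_deriv ?_
    have hεz : 0 < ε + z ^ 2 := by positivity
    have hsq : 1 + (id z / √ε) ^ 2 = (ε + z ^ 2) / ε := by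
      rw [id, div_pow, sq_sqrt hε.le]
      field_simp
    rw [smul_eq_mul, hsq, sqrt_div hεz.le, rpow_neg hεz.le, ← sqrt_eq_rpow]
    field_simp
  rw [← intervalIntegral.integral_of_le zero_le_one,
    intervalIntegral.integral_eq_sub_of_hasDerivAt (fun z _ => hderiv z)
      ((continuous_rpow_const_add_sq hε _).intervalIntegrable 0 1)]
  simp

/-- The integrand of the mass `M(ω)`, with `s = 1/α` and `ε = 1 - ω/ω*`. -/
noncomputable def massIntegrand (s ε z : ℝ) : ℝ :=
  (1 + z ^ 2) ^ (-s) * (ε + z ^ 2) ^ (-(1 / 2 : ℝ))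

noncomputable def massIntegral (s ε : ℝ) : ℝ :=
  ∫ z in Ioi (0 : ℝ), massIntegrand s ε z

section massIntegrand

variable {s ε : ℝ}

lemma continuous_massIntegrand (hε : 0 < ε) : Continuous (massIntegrand s ε) :=
  (continuous_rpow_const_add_sq one_pos _).mul (continuous_rpow_const_add_sq hε _)

lemma massIntegrand_nonneg (hε : 0 ≤ ε) (z : ℝ) : 0 ≤ massIntegrand s ε z := by
  unfold massIntegrand
  positivity

lemma massIntegrand_le_rpow (hs : 0 ≤ s) (hε : 0 ≤ ε) {z : ℝ} (hz : 0 < z) :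
    massIntegrand s ε z ≤ z ^ (-(1 + 2 * s)) := by
  have hz2 : 0 < z ^ 2 := by positivity
  calc massIntegrand s ε z ≤ (z ^ 2) ^ (-s) * (z ^ 2) ^ (-(1 / 2 : ℝ)) := by
        unfold massIntegrand
        exact mul_le_mul (rpow_le_rpow_of_nonpos hz2 (by linarith) (by linarith))
          (rpow_le_rpow_of_nonpos hz2 (by linarith) (by norm_num)) (by positivity) (by positivity)
    _ = z ^ (-(1 + 2 * s)) := by
        rw [← rpow_natCast z 2, ← rpow_mul hz.le, ← rpow_mul hz.le, ← rpow_add hz]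
        norm_num

lemma integrableOn_massIntegrand_Ioi_one (hs : 0 < s) (hε : 0 < ε) :
    IntegrableOn (massIntegrand s ε) (Ioi 1) := by
  refine (integrableOn_Ioi_rpow_of_lt (a := -(1 + 2 * s)) (by linarith) one_pos).mono'
    (continuous_massIntegrand hε).aestronglyMeasurable ?_
  filter_upwards [ae_restrict_mem measurableSet_Ioi] with z hz
  rw [norm_of_nonneg (massIntegrand_nonneg hε.le z)]
  exact massIntegrand_le_rpow hs.le hε.le (one_pos.trans hz)

lemma integral_Ioi_one_massIntegrand_le (hs : 0 < s) (hε : 0 < ε) :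
    ∫ z in Ioi (1 : ℝ), massIntegrand s ε z ≤ (2 * s)⁻¹ := by
  calc ∫ z in Ioi (1 : ℝ), massIntegrand s ε z ≤ ∫ z in Ioi (1 : ℝ), z ^ (-(1 + 2 * s)) :=
        setIntegral_mono_on (integrableOn_massIntegrand_Ioi_one hs hε)
          (integrableOn_Ioi_rpow_of_lt (by linarith) one_pos) measurableSet_Ioi
          fun z hz => massIntegrand_le_rpow hs.le hε.le (one_pos.trans hz)
    _ = (2 * s)⁻¹ := by
        rw [integral_Ioi_rpow_of_lt (by linarith) one_pos, one_rpow]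
        field_simp
        ring

lemma massIntegrand_le (hs : 0 ≤ s) (hε : 0 ≤ ε) (z : ℝ) :
    massIntegrand s ε z ≤ (ε + z ^ 2) ^ (-(1 / 2 : ℝ)) :=
  mul_le_of_le_one_left (by positivity)
    (rpow_le_one_of_one_le_of_nonpos (by nlinarith) (by linarith))

lemma rpow_add_sq_neg_half_sub_le_massIntegrand (hs : s ≤ 1) (hε : 0 ≤ ε) {z : ℝ} (hz : 0 < z) :
    (ε + z ^ 2) ^ (-(1 / 2 : ℝ)) - z ≤ massIntegrand s ε z := by
  set g := (ε + z ^ 2) ^ (-(1 / 2 : ℝ))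
  have hg : 0 ≤ g := by positivity
  have hzg : z * g ≤ 1 := by
    have hg_le : g ≤ (z ^ 2) ^ (-(1 / 2 : ℝ)) :=
      rpow_le_rpow_of_nonpos (by positivity) (by linarith) (by norm_num)
    rw [rpow_neg (by positivity), ← sqrt_eq_rpow, sqrt_sq hz.le] at hg_le
    calc z * g ≤ z * z⁻¹ := by gcongr
      _ = 1 := mul_inv_cancel₀ hz.ne'
  have hfactor : 1 - z ^ 2 ≤ (1 + z ^ 2) ^ (-s) := by
    have h1 : 1 - z ^ 2 ≤ (1 + z ^ 2) ^ (-1 : ℝ) := by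
      rw [rpow_neg_one, ← one_div, le_div_iff₀ (by positivity)]
      nlinarith
    exact h1.trans (rpow_le_rpow_of_exponent_le (by nlinarith) (by linarith))
  calc g - z ≤ (1 - z ^ 2) * g := by nlinarith
    _ ≤ massIntegrand s ε z := by unfold massIntegrand; gcongr

lemma massIntegral_eq_add (hs : 0 < s) (hε : 0 < ε) :
    massIntegral s ε =
      (∫ z in Ioc (0 : ℝ) 1, massIntegrand s ε z) + ∫ z in Ioi (1 : ℝ), massIntegrand s ε z := by
  rw [massIntegral, ← Ioc_union_Ioi_eq_Ioi zero_le_one,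
    setIntegral_union (Ioc_disjoint_Ioi le_rfl) measurableSet_Ioi
      (continuous_massIntegrand hε).integrableOn_Ioc (integrableOn_massIntegrand_Ioi_one hs hε)]

lemma integral_Ioc_massIntegrand_mem (hs0 : 0 ≤ s) (hs1 : s ≤ 1) (hε : 0 < ε) :
    ∫ z in Ioc (0 : ℝ) 1, massIntegrand s ε z ∈ Icc (arsinh (√ε)⁻¹ - 1 / 2) (arsinh (√ε)⁻¹) := by
  have hg : IntegrableOn (fun z : ℝ => (ε + z ^ 2) ^ (-(1 / 2 : ℝ))) (Ioc 0 1) :=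
    (continuous_rpow_const_add_sq hε _).integrableOn_Ioc
  have hf : IntegrableOn (massIntegrand s ε) (Ioc 0 1) :=
    (continuous_massIntegrand hε).integrableOn_Ioc
  have hid : IntegrableOn (fun z : ℝ => z) (Ioc 0 1) := continuous_id.integrableOn_Ioc
  rw [← integral_Ioc_zero_one_rpow_add_sq_neg_half hε]
  constructor
  · have hid_eq : ∫ z in Ioc (0 : ℝ) 1, z = 1 / 2 := by
      rw [← intervalIntegral.integral_of_le zero_le_one, integral_id]
      norm_num
    have hmono := setIntegral_mono_on (hg.sub hid) hf measurableSet_Ioc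
      fun z hz => rpow_add_sq_neg_half_sub_le_massIntegrand hs1 hε.le hz.1
    rwa [integral_sub' hg hid, hid_eq] at hmono
  · exact setIntegral_mono_on hf hg measurableSet_Ioc fun z _ => massIntegrand_le hs0 hε.le z

lemma abs_massIntegral_add_half_log_le (hs0 : 0 < s) (hs1 : s ≤ 1) (hε0 : 0 < ε) (hε1 : ε ≤ 1) :
    |massIntegral s ε + log ε / 2| ≤ log 3 + (2 * s)⁻¹ := by
  have hx : 1 ≤ (√ε)⁻¹ := one_le_inv₀ (sqrt_pos.2 hε0) |>.2 (sqrt_le_one.2 hε1)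
  have hlog : log (√ε)⁻¹ = -(log ε / 2) := by rw [log_inv, log_sqrt hε0.le]
  have hlow := log_le_arsinh (one_pos.trans_le hx)
  have hup := arsinh_le_log_three_add_log hx
  obtain ⟨hIoc_low, hIoc_up⟩ := integral_Ioc_massIntegrand_mem hs0.le hs1 hε0
  have hIoi_up := integral_Ioi_one_massIntegrand_le hs0 hε0
  have hIoi_low : 0 ≤ ∫ z in Ioi (1 : ℝ), massIntegrand s ε z :=
    setIntegral_nonneg measurableSet_Ioi fun z _ => massIntegrand_nonneg hε0.le z
  have hlog3 : 0 ≤ log 3 := log_nonneg (by norm_num)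
  have hs_inv : 1 / 2 ≤ (2 * s)⁻¹ := by
    rw [one_div]
    exact inv_anti₀ (by positivity) (by linarith)
  rw [massIntegral_eq_add hs0 hε0, abs_le]
  constructor <;> linarith

lemma isBigO_massIntegral_add_half_log (hs0 : 0 < s) (hs1 : s ≤ 1) :
    (fun ε => massIntegral s ε + log ε / 2) =O[𝓝[>] 0] fun _ => (1 : ℝ) := by
  refine IsBigO.of_bound (log 3 + (2 * s)⁻¹) ?_
  filter_upwards [Ioc_mem_nhdsGT one_pos] with ε hε
  rw [norm_one, mul_one, norm_eq_abs]
  exact abs_massIntegral_add_half_log_le hs0 hs1 hε.1 hε.2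

end massIntegrand

lemma tendsto_sub_nhdsLT_nhdsGT_zero (a : ℝ) : Tendsto (a - ·) (𝓝[<] a) (𝓝[>] 0) := by
  have hmaps : MapsTo (a - ·) (Iio a) (Ioi 0) := fun x (hx : x < a) => sub_pos.2 hx
  simpa using (continuous_sub_left a).continuousWithinAt.tendsto_nhdsWithin (x := a) hmaps

lemma tendsto_const_mul_nhdsGT_zero {c : ℝ} (hc : 0 < c) :
    Tendsto (c * ·) (𝓝[>] 0) (𝓝[>] 0) := by
  have hmaps : MapsTo (c * ·) (Ioi 0) (Ioi 0) := fun t (ht : 0 < t) => mul_pos hc ht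
  simpa using (continuous_const_mul c).continuousWithinAt.tendsto_nhdsWithin (x := 0) hmaps

lemma tendsto_div_of_isBigO_sub_const_mul {ι : Type*} {l : Filter ι} {f L : ι → ℝ} {c : ℝ}
    (hL : Tendsto L l atTop) (hf : (fun x => f x - c * L x) =O[l] fun _ => (1 : ℝ)) :
    Tendsto (fun x => f x / L x) l (𝓝 c) := by
  have hL_norm : Tendsto (fun x => ‖L x‖) l atTop :=
    tendsto_norm_atTop_atTop.comp hL
  have hrem := ((hf.trans_isLittleO ((isLittleO_one_left_iff ℝ).2 hL_norm)).tendsto_div_nhds_zero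
    ).add_const c
  rw [zero_add] at hrem
  refine hrem.congr' ?_
  filter_upwards [hL.eventually_gt_atTop 0] with x hx
  rw [sub_div, mul_div_cancel_right₀ _ hx.ne', sub_add_cancel]

lemma tendsto_massIntegral_const_mul_div_neg_log {s c : ℝ} (hs0 : 0 < s) (hs1 : s ≤ 1)
    (hc : 0 < c) :
    Tendsto (fun t => massIntegral s (c * t) / -log t) (𝓝[>] 0) (𝓝 (1 / 2)) := by
  have hlog : Tendsto (fun t => -log t) (𝓝[>] 0) atTop :=
    tendsto_neg_atBot_atTop.comp tendsto_log_nhdsGT_zero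
  refine tendsto_div_of_isBigO_sub_const_mul hlog ?_
  have hO := ((isBigO_massIntegral_add_half_log hs0 hs1).comp_tendsto
    (tendsto_const_mul_nhdsGT_zero hc)).sub
    (isBigO_const_one ℝ (log c / 2) (𝓝[>] 0))
  refine hO.congr' ?_ EventuallyEq.rfl
  filter_upwards [self_mem_nhdsWithin] with t (ht : 0 < t)
  simp only [Function.comp_apply, log_mul hc.ne' ht.ne']
  ring

theorem stmt11 (α : ℕ) (hα : 1 ≤ α) (M : ℝ → ℝ)
    (hM : ∀ ω : ℝ, M ω =
      (2 / (α : ℝ)) * ω ^ (1 / (α : ℝ) - 1 / 2) * (1 / ((α : ℝ) + 1)) ^ (-(1 / (α : ℝ))) *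
        ∫ z in Set.Ioi (0 : ℝ),
          (1 + z ^ 2) ^ (-(1 / (α : ℝ))) *
            ((1 - ω / (1 / ((α : ℝ) + 1))) + z ^ 2) ^ (-(1 / 2 : ℝ))) :
    Tendsto (fun ω : ℝ => M ω / (-Real.log (1 / ((α : ℝ) + 1) - ω)))
        (𝓝[<] (1 / ((α : ℝ) + 1))) (𝓝 (1 / ((α : ℝ) * Real.sqrt (1 / ((α : ℝ) + 1))))) ∧
      Tendsto M (𝓝[<] (1 / ((α : ℝ) + 1))) atTop := by
  set a : ℝ := (α : ℝ)
  have ha : 1 ≤ a := Nat.one_le_cast.2 hα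
  set W := 1 / (a + 1)
  have hW : 0 < W := by positivity
  set C := fun ω : ℝ => 2 / a * ω ^ (1 / a - 1 / 2) * W ^ (-(1 / a))
  have hMC (ω : ℝ) : M ω = C ω * massIntegral (1 / a) ((a + 1) * (W - ω)) := by
    have hε : 1 - ω / W = (a + 1) * (W - ω) := by
      simp only [W]
      field_simp
    rw [hM, hε]
    rfl
  have hCW : C W * (1 / 2) = 1 / (a * √W) := by
    have : W ^ (1 / a - 1 / 2) * W ^ (-(1 / a)) = (√W)⁻¹ := by
      rw [← rpow_add hW, sqrt_eq_rpow, ← rpow_neg hW.le]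
      ring_nf
    simp only [C, mul_assoc, this]
    field_simp
  have hsub := tendsto_sub_nhdsLT_nhdsGT_zero W
  have hC : Tendsto C (𝓝[<] W) (𝓝 (C W)) :=
    ((continuousAt_const.mul (continuousAt_rpow_const W _ (Or.inl hW.ne'))).mul
      continuousAt_const).tendsto.mono_left nhdsWithin_le_nhds
  have hratio := hC.mul ((tendsto_massIntegral_const_mul_div_neg_log (by positivity)
    (div_le_one_of_le₀ ha (by positivity)) (by positivity : 0 < a + 1)).comp hsub)
  rw [hCW] at hratio
  have hlim : Tendsto (fun ω => M ω / -log (W - ω)) (𝓝[<] W) (𝓝 (1 / (a * √W))) :=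
    hratio.congr fun ω => by simp only [Function.comp_apply, hMC, mul_div_assoc]
  have hlog : Tendsto (fun ω => -log (W - ω)) (𝓝[<] W) atTop :=
    tendsto_neg_atBot_atTop.comp (tendsto_log_nhdsGT_zero.comp hsub)
  refine ⟨hlim, (hlim.pos_mul_atTop (by positivity) hlog).congr' ?_⟩
  filter_upwards [hlog.eventually_gt_atTop 0] with ω hω
  exact div_mul_cancel₀ _ hω.ne'
end

section
/- Let α be a natural number with 1 ≤ α < 2, ω* = 1/(α+1), and M(ω) = (2/α)·ω^{1/α−1/2}·(ω*)^{-1/α}·∫_0^∞ (1+z²)^{-1/α}·((1−ω/ω*)+z²)^{-1/2} dz. Then M is strictly increasing on (0, ω*). -/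
open Real MeasureTheory Set

lemma aux_cont (c : ℝ) (hc : 0 < c) :
    Continuous (fun z : ℝ => (1 + z ^ 2) ^ (-(1 : ℝ)) * (c + z ^ 2) ^ (-(1 / 2 : ℝ))) := by
  apply Continuous.mul
  · apply Continuous.rpow_const (by continuity)
    intro x; left; positivity
  · apply Continuous.rpow_const (by continuity)
    intro x; left; positivity

lemma aux_int (c : ℝ) (hc : 0 < c) :
    IntegrableOn (fun z : ℝ => (1 + z ^ 2) ^ (-(1 : ℝ)) * (c + z ^ 2) ^ (-(1 / 2 : ℝ)))
      (Ioi (0 : ℝ)) := by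
  have hint : IntegrableOn (fun z : ℝ => c ^ (-(1/2 : ℝ)) * (1 + z ^ 2)⁻¹) (Ioi (0:ℝ)) :=
    (integrable_inv_one_add_sq.restrict).const_mul _
  refine Integrable.mono hint ((aux_cont c hc).aestronglyMeasurable.restrict) ?_
  filter_upwards [ae_restrict_mem measurableSet_Ioi] with z _
  have h1 : (0:ℝ) < 1 + z ^ 2 := by positivity
  have h2 : (0:ℝ) < c + z ^ 2 := by positivity
  rw [Real.norm_eq_abs, Real.norm_eq_abs, abs_of_nonneg (by positivity),
    abs_of_nonneg (by positivity)]
  have hle : (c + z ^ 2) ^ (-(1/2 : ℝ)) ≤ c ^ (-(1/2 : ℝ)) :=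
    Real.rpow_le_rpow_of_nonpos hc (by nlinarith) (by norm_num)
  calc (1 + z ^ 2) ^ (-(1 : ℝ)) * (c + z ^ 2) ^ (-(1/2 : ℝ))
      ≤ (1 + z ^ 2) ^ (-(1 : ℝ)) * c ^ (-(1/2 : ℝ)) := by
        apply mul_le_mul_of_nonneg_left hle (Real.rpow_nonneg (by positivity) _)
    _ = c ^ (-(1/2 : ℝ)) * (1 + z ^ 2)⁻¹ := by
        rw [Real.rpow_neg_one]; ring

lemma aux_pos (c : ℝ) (hc : 0 < c) :
    0 < ∫ z in Ioi (0:ℝ), (1 + z ^ 2) ^ (-(1 : ℝ)) * (c + z ^ 2) ^ (-(1 / 2 : ℝ)) := by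
  rw [setIntegral_pos_iff_support_of_nonneg_ae]
  · have hsub : Ioi (0:ℝ) ⊆ Function.support
        (fun z : ℝ => (1 + z ^ 2) ^ (-(1 : ℝ)) * (c + z ^ 2) ^ (-(1 / 2 : ℝ))) ∩ Ioi 0 := by
      intro z hz
      refine ⟨?_, hz⟩
      have h1 : (0:ℝ) < 1 + z ^ 2 := by positivity
      have h2 : (0:ℝ) < c + z ^ 2 := by positivity
      have : 0 < (1 + z ^ 2) ^ (-(1 : ℝ)) * (c + z ^ 2) ^ (-(1 / 2 : ℝ)) :=
        mul_pos (Real.rpow_pos_of_pos h1 _) (Real.rpow_pos_of_pos h2 _)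
      exact ne_of_gt this
    have := measure_mono (μ := volume) hsub
    simp only [Real.volume_Ioi] at this ⊢
    exact lt_of_lt_of_le (by simp) this
  · filter_upwards [ae_restrict_mem measurableSet_Ioi] with z _
    positivity
  · exact aux_int c hc

theorem stmt13 (α : ℕ) (hα : 1 ≤ α) (hα2 : α < 2) (M : ℝ → ℝ)
    (hM : ∀ ω : ℝ, M ω =
      (2 / (α : ℝ)) * ω ^ (1 / (α : ℝ) - 1 / 2) * (1 / ((α : ℝ) + 1)) ^ (-(1 / (α : ℝ))) *
        ∫ z in Set.Ioi (0 : ℝ),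
          (1 + z ^ 2) ^ (-(1 / (α : ℝ))) *
            ((1 - ω / (1 / ((α : ℝ) + 1))) + z ^ 2) ^ (-(1 / 2 : ℝ))) :
    StrictMonoOn M (Set.Ioo (0 : ℝ) (1 / ((α : ℝ) + 1))) := by
  interval_cases α
  simp only [Nat.cast_one] at hM ⊢
  norm_num at hM ⊢
  intro a ha b hb hab
  rw [hM a, hM b]
  have hca : (0:ℝ) < 1 - 2 * a := by linarith [ha.2]
  have hcb : (0:ℝ) < 1 - 2 * b := by linarith [hb.2]
  have hIa := aux_pos _ hca
  have hIb := aux_pos _ hcb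
  simp_rw [show ∀ x:ℝ, 1 - x/(1/2) = 1 - 2*x from fun x => by ring]
  have hII : (∫ z in Ioi (0:ℝ), (1 + z ^ 2) ^ (-(1 : ℝ)) * ((1 - 2*a) + z ^ 2) ^ (-(1 / 2 : ℝ)))
      ≤ ∫ z in Ioi (0:ℝ), (1 + z ^ 2) ^ (-(1 : ℝ)) * ((1 - 2*b) + z ^ 2) ^ (-(1 / 2 : ℝ)) := by
    apply setIntegral_mono_on (aux_int _ hca) (aux_int _ hcb) measurableSet_Ioi
    intro z hz
    apply mul_le_mul_of_nonneg_left _ (Real.rpow_nonneg (by positivity) _)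
    apply Real.rpow_le_rpow_of_nonpos (by positivity) (by nlinarith) (by norm_num)
  have hpa : (0:ℝ) < a ^ (1/2 : ℝ) := Real.rpow_pos_of_pos ha.1 _
  have hpb : (0:ℝ) < b ^ (1/2 : ℝ) := Real.rpow_pos_of_pos (lt_trans ha.1 hab) _
  have hab' : a ^ (1/2 : ℝ) < b ^ (1/2 : ℝ) :=
    Real.rpow_lt_rpow (le_of_lt ha.1) hab (by norm_num)
  calc 2 * a ^ (1/2:ℝ) * 2 *
        (∫ z in Ioi (0:ℝ), (1 + z ^ 2) ^ (-(1 : ℝ)) * ((1 - 2*a) + z ^ 2) ^ (-(1 / 2 : ℝ)))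
      < 2 * b ^ (1/2:ℝ) * 2 *
        (∫ z in Ioi (0:ℝ), (1 + z ^ 2) ^ (-(1 : ℝ)) * ((1 - 2*a) + z ^ 2) ^ (-(1 / 2 : ℝ))) := by
        apply mul_lt_mul_of_pos_right _ hIa
        nlinarith
    _ ≤ _ := by
        apply mul_le_mul_of_nonneg_left hII
        nlinarith
end

section
/- Let α > 2 be a natural number, ω* = 1/(α+1), and M(ω) the one-dimensional solitary wave mass. Then M is strictly convex on (0, ω*), i.e., M''(ω) > 0 for all ω ∈ (0, ω*). -/
/-!
With `p = 1/α`, `a = p - 1/2 < 0`, `b = α + 1 = 1/ω*` and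
`J_q(c) = ∫_0^∞ (1 + z²)^(-p) (c + z²)^(-q) dz`, the mass is `M(ω) = K ω^a J_{1/2}(1 - bω)`
with `K > 0`. Differentiating under the integral sign gives `J_q' = -q J_{q+1}`, hence
`M''(ω) = K ω^(a-2) ∫_0^∞ (1 + z²)^(-p) A^(-5/2) (a(a-1)A² + a s A + 3/4 s²) dz`
with `A = 1 - bω + z²` and `s = bω`. For `a < 0` the quadratic form in `(A, s)` is positive
definite, so the integrand and `M''` are positive on `(0, ω*)`, and strict convexity follows.
-/

open Real MeasureTheory Set Filter Topology

noncomputable section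

lemma deriv_deriv_eq_of_hasDerivAt {𝕜 F : Type*} [NontriviallyNormedField 𝕜]
    [NormedAddCommGroup F] [NormedSpace 𝕜 F] {f f' : 𝕜 → F} {f'' : F} {x : 𝕜}
    (hf : ∀ᶠ y in 𝓝 x, HasDerivAt f (f' y) y) (hf' : HasDerivAt f' f'' x) :
    deriv (deriv f) x = f'' := by
  rw [EventuallyEq.deriv_eq (hf.mono fun y hy => hy.deriv)]
  exact hf'.deriv

namespace SolitaryWave

def kernel (p q c z : ℝ) : ℝ := (1 + z ^ 2) ^ (-p) * (c + z ^ 2) ^ (-q)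

def kernelIntegral (p q c : ℝ) : ℝ := ∫ z in Ioi 0, kernel p q c z

variable {p q c : ℝ}

lemma kernel_pos (p q : ℝ) (hc : 0 < c) (z : ℝ) : 0 < kernel p q c z := by
  unfold kernel; positivity

lemma continuous_kernel (p q : ℝ) (hc : 0 < c) : Continuous (kernel p q c) := by
  unfold kernel
  have h : ∀ d : ℝ, 0 < d → ∀ r : ℝ, Continuous fun z : ℝ => (d + z ^ 2) ^ r :=
    fun d hd r => (by fun_prop : Continuous fun z : ℝ => d + z ^ 2).rpow_const
      fun z => Or.inl (by positivity)
  exact (h 1 one_pos _).mul (h c hc _)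

lemma kernel_add_one (p q : ℝ) (hc : 0 < c) (z : ℝ) :
    kernel p (q + 1) c z = kernel p q c z / (c + z ^ 2) := by
  rw [kernel, kernel, neg_add, rpow_add (by positivity), rpow_neg_one]
  ring

lemma kernel_le_kernel_of_le (p : ℝ) (hq : 0 ≤ q) {c' : ℝ} (hc : 0 < c) (hcc' : c ≤ c')
    (z : ℝ) :
    kernel p q c' z ≤ kernel p q c z := by
  unfold kernel
  exact mul_le_mul_of_nonneg_left
    (rpow_le_rpow_of_nonpos (by positivity) (by linarith) (by linarith)) (by positivity)

lemma kernel_le_rpow (hp : 0 ≤ p) (hq : 0 ≤ q) (hc : 0 ≤ c) {z : ℝ} (hz : 0 < z) :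
    kernel p q c z ≤ z ^ (-(2 * (p + q))) := by
  have hz2 : 0 < z ^ 2 := by positivity
  calc kernel p q c z ≤ (z ^ 2) ^ (-p) * (z ^ 2) ^ (-q) := by
        unfold kernel
        exact mul_le_mul (rpow_le_rpow_of_nonpos hz2 (by linarith) (by linarith))
          (rpow_le_rpow_of_nonpos hz2 (by linarith) (by linarith)) (by positivity) (by positivity)
    _ = z ^ (-(2 * (p + q))) := by
        rw [← rpow_add hz2, ← rpow_natCast, ← rpow_mul hz.le]
        push_cast
        ring_nf

lemma integrableOn_kernel (hp : 0 ≤ p) (hq : 0 ≤ q) (hpq : 1 / 2 < p + q) (hc : 0 < c) :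
    IntegrableOn (kernel p q c) (Ioi 0) := by
  rw [← Ioc_union_Ioi_eq_Ioi zero_le_one]
  refine IntegrableOn.union ((continuous_kernel p q hc).integrableOn_Icc.mono_set
    Ioc_subset_Icc_self) ?_
  refine (integrableOn_Ioi_rpow_of_lt (a := -(2 * (p + q))) (by linarith) one_pos).mono'
    (continuous_kernel p q hc).aestronglyMeasurable.restrict ?_
  filter_upwards [ae_restrict_mem measurableSet_Ioi] with z hz
  rw [norm_of_nonneg (kernel_pos p q hc z).le]
  exact kernel_le_rpow hp hq hc.le (one_pos.trans hz)

lemma hasDerivAt_kernel (p q : ℝ) (hc : 0 < c) (z : ℝ) :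
    HasDerivAt (fun c => kernel p q c z) (-q * kernel p (q + 1) c z) c := by
  refine ((((hasDerivAt_id' c).add_const (z ^ 2)).rpow_const (p := -q)
    (Or.inl (by positivity))).const_mul ((1 + z ^ 2) ^ (-p))).congr_deriv ?_
  rw [kernel, show -q - 1 = -(q + 1) by ring]
  ring

lemma hasDerivAt_kernelIntegral (hp : 0 ≤ p) (hq : 0 ≤ q) (hpq : 1 / 2 < p + q) (hc : 0 < c) :
    HasDerivAt (kernelIntegral p q) (-q * kernelIntegral p (q + 1) c) c := by
  have hc2 : 0 < c / 2 := half_pos hc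
  have key := hasDerivAt_integral_of_dominated_loc_of_deriv_le
    (μ := volume.restrict (Ioi 0)) (F := fun x z => kernel p q x z)
    (F' := fun x z => -q * kernel p (q + 1) x z) (bound := fun z => q * kernel p (q + 1) (c / 2) z)
    (Ioi_mem_nhds (half_lt_self hc))
    ((eventually_gt_nhds hc).mono fun x hx => (continuous_kernel p q hx).aestronglyMeasurable)
    (integrableOn_kernel hp hq hpq hc)
    ((continuous_kernel p (q + 1) hc).aestronglyMeasurable.const_mul _)
    (ae_of_all _ fun z x (hx : c / 2 < x) => ?_)
    ((integrableOn_kernel hp (by linarith) (by linarith) hc2).const_mul q)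
    (ae_of_all _ fun z x (hx : c / 2 < x) => hasDerivAt_kernel p q (hc2.trans hx) z)
  · rw [integral_const_mul] at key
    exact key.2
  · rw [norm_mul, norm_neg, norm_of_nonneg hq, norm_of_nonneg (kernel_pos p _ (hc2.trans hx) z).le]
    exact mul_le_mul_of_nonneg_left (kernel_le_kernel_of_le p (by linarith) hc2 hx.le z) hq

lemma hasDerivAt_kernelIntegral_one_sub_mul (hp : 0 ≤ p) (hq : 0 ≤ q) (hpq : 1 / 2 < p + q)
    {b ω : ℝ} (hω : 0 < 1 - b * ω) :
    HasDerivAt (fun ω => kernelIntegral p q (1 - b * ω))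
      (q * b * kernelIntegral p (q + 1) (1 - b * ω)) ω := by
  refine ((hasDerivAt_kernelIntegral hp hq hpq hω).comp ω
    (((hasDerivAt_id' ω).const_mul b).const_sub 1)).congr_deriv ?_
  ring

/-- With `a = 1/α - 1/2` this is `3/4` of the paper's `G_α(A, s)`; its discriminant in `s`
is `a (3 - 2a) A² < 0`. -/
lemma quadratic_pos_of_neg {a A s : ℝ} (ha : a < 0) (hA : 0 < A) :
    0 < a * (a - 1) * A ^ 2 + a * s * A + 3 / 4 * s ^ 2 := by
  nlinarith [sq_nonneg (3 * s + 2 * a * A), mul_pos (mul_pos_of_neg_of_neg ha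
    (show 2 * a - 3 < 0 by linarith)) (mul_pos hA hA)]

lemma kernelIntegral_combination_pos (hp : 0 < p) {a : ℝ} (ha : a < 0) (hc : 0 < c) (s : ℝ) :
    0 < a * (a - 1) * kernelIntegral p (1 / 2) c + a * s * kernelIntegral p (3 / 2) c
      + 3 / 4 * s ^ 2 * kernelIntegral p (5 / 2) c := by
  have hint : ∀ q, 1 / 2 ≤ q → IntegrableOn (kernel p q c) (Ioi 0) := fun q hq =>
    integrableOn_kernel hp.le (by linarith) (by linarith) hc
  have h1 := (hint (1 / 2) le_rfl).const_mul (a * (a - 1))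
  have h3 := (hint (3 / 2) (by norm_num)).const_mul (a * s)
  have h5 := (hint (5 / 2) (by norm_num)).const_mul (3 / 4 * s ^ 2)
  set F : ℝ → ℝ := fun z => a * (a - 1) * kernel p (1 / 2) c z + a * s * kernel p (3 / 2) c z
    + 3 / 4 * s ^ 2 * kernel p (5 / 2) c z
  have hF_pos : ∀ z, 0 < F z := by
    intro z
    have h3 := kernel_add_one p (1 / 2) hc z
    have h5 := kernel_add_one p (3 / 2) hc z
    norm_num only at h3 h5
    have : F z = kernel p (5 / 2) c z
        * (a * (a - 1) * (c + z ^ 2) ^ 2 + a * s * (c + z ^ 2) + 3 / 4 * s ^ 2) := by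
      simp only [F, h5, h3]
      field_simp
    rw [this]
    exact mul_pos (kernel_pos _ _ hc z) (quadratic_pos_of_neg ha (by positivity))
  have h_int_pos : 0 < ∫ z in Ioi 0, F z := by
    rw [setIntegral_pos_iff_support_of_nonneg_ae (ae_of_all _ fun z => (hF_pos z).le)
      ((h1.add h3).add h5), Function.support_eq_univ fun z => (hF_pos z).ne', univ_inter,
      volume_Ioi]
    exact ENNReal.zero_lt_top
  simp only [F] at h_int_pos
  rw [integral_add _ h5, integral_add h1 h3, integral_const_mul, integral_const_mul,
    integral_const_mul] at h_int_pos
  · exact h_int_pos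
  · exact h1.add h3

def massProfile (p a b ω : ℝ) : ℝ := ω ^ a * kernelIntegral p (1 / 2) (1 - b * ω)

def massProfileDeriv (p a b ω : ℝ) : ℝ :=
  a * ω ^ (a - 1) * kernelIntegral p (1 / 2) (1 - b * ω)
    + b / 2 * ω ^ a * kernelIntegral p (3 / 2) (1 - b * ω)

def massProfileDeriv2 (p a b ω : ℝ) : ℝ :=
  a * (a - 1) * ω ^ (a - 2) * kernelIntegral p (1 / 2) (1 - b * ω)
    + a * b * ω ^ (a - 1) * kernelIntegral p (3 / 2) (1 - b * ω)
    + 3 / 4 * b ^ 2 * ω ^ a * kernelIntegral p (5 / 2) (1 - b * ω)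

variable {a b ω : ℝ}

lemma hasDerivAt_massProfile (hp : 0 < p) (hω : 0 < ω) (hbω : 0 < 1 - b * ω) :
    HasDerivAt (massProfile p a b) (massProfileDeriv p a b ω) ω := by
  have h := (hasDerivAt_rpow_const (p := a) (Or.inl hω.ne')).mul
    (hasDerivAt_kernelIntegral_one_sub_mul hp.le (q := 1 / 2) (by norm_num) (by linarith) hbω)
  norm_num only at h
  refine h.congr_deriv ?_
  rw [massProfileDeriv]
  ring

lemma hasDerivAt_massProfileDeriv (hp : 0 < p) (hω : 0 < ω) (hbω : 0 < 1 - b * ω) :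
    HasDerivAt (massProfileDeriv p a b) (massProfileDeriv2 p a b ω) ω := by
  have h1 := ((hasDerivAt_rpow_const (p := a - 1) (Or.inl hω.ne')).const_mul a).mul
    (hasDerivAt_kernelIntegral_one_sub_mul hp.le (q := 1 / 2) (by norm_num) (by linarith) hbω)
  have h2 := ((hasDerivAt_rpow_const (p := a) (Or.inl hω.ne')).const_mul (b / 2)).mul
    (hasDerivAt_kernelIntegral_one_sub_mul hp.le (q := 3 / 2) (by norm_num) (by linarith) hbω)
  norm_num only at h1 h2
  refine (h1.add h2).congr_deriv ?_
  rw [massProfileDeriv2, show a - 1 - 1 = a - 2 by ring]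
  ring

lemma massProfileDeriv2_pos (hp : 0 < p) (ha : a < 0) (hω : 0 < ω) (hbω : 0 < 1 - b * ω) :
    0 < massProfileDeriv2 p a b ω := by
  have h1 : ω ^ (a - 1) = ω ^ (a - 2) * ω := by
    rw [← rpow_add_one hω.ne']
    ring_nf
  have h0 : ω ^ a = ω ^ (a - 2) * ω ^ 2 := by
    rw [← rpow_natCast, ← rpow_add hω]
    norm_num
  have : massProfileDeriv2 p a b ω = ω ^ (a - 2) *
      (a * (a - 1) * kernelIntegral p (1 / 2) (1 - b * ω)
      + a * (b * ω) * kernelIntegral p (3 / 2) (1 - b * ω)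
      + 3 / 4 * (b * ω) ^ 2 * kernelIntegral p (5 / 2) (1 - b * ω)) := by
    rw [massProfileDeriv2, h1, h0]
    ring
  rw [this]
  exact mul_pos (rpow_pos_of_pos hω _) (kernelIntegral_combination_pos hp ha hbω _)

end SolitaryWave

end

open SolitaryWave

theorem stmt15 (α : ℕ) (hα : 2 < α) (M : ℝ → ℝ)
    (hM : ∀ ω : ℝ, M ω =
      (2 / (α : ℝ)) * ω ^ (1 / (α : ℝ) - 1 / 2) * (1 / ((α : ℝ) + 1)) ^ (-(1 / (α : ℝ))) *
        ∫ z in Set.Ioi (0 : ℝ),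
          (1 + z ^ 2) ^ (-(1 / (α : ℝ))) *
            ((1 - ω / (1 / ((α : ℝ) + 1))) + z ^ 2) ^ (-(1 / 2 : ℝ))) :
    StrictConvexOn ℝ (Set.Ioo (0 : ℝ) (1 / ((α : ℝ) + 1))) M ∧
      ∀ ω ∈ Set.Ioo (0 : ℝ) (1 / ((α : ℝ) + 1)), 0 < deriv (deriv M) ω := by
  set p : ℝ := 1 / α
  set b : ℝ := α + 1
  set K : ℝ := 2 / α * (1 / b) ^ (-p)
  have hα' : (2 : ℝ) < α := by exact_mod_cast hα
  have hp : 0 < p := by positivity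
  have ha : p - 1 / 2 < 0 := by
    rw [sub_neg, div_lt_div_iff₀ (by positivity) two_pos]
    linarith
  have hb : 0 < b := by positivity
  have hK : 0 < K := by positivity
  have hM_eq : M = fun ω => K * massProfile p (p - 1 / 2) b ω := by
    funext ω
    rw [hM, massProfile, kernelIntegral, show ω / (1 / b) = b * ω by field_simp]
    simp only [kernel, K]
    ring
  have hdom : ∀ ω ∈ Ioo 0 (1 / b), 0 < ω ∧ 0 < 1 - b * ω := fun ω hω =>
    ⟨hω.1, by nlinarith [(lt_div_iff₀ hb).1 hω.2]⟩
  have hM' : ∀ ω ∈ Ioo 0 (1 / b), HasDerivAt M (K * massProfileDeriv p (p - 1 / 2) b ω) ω :=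
    fun ω hω => hM_eq ▸ (hasDerivAt_massProfile hp (hdom ω hω).1 (hdom ω hω).2).const_mul K
  have hM'' : ∀ ω ∈ Ioo 0 (1 / b), 0 < deriv (deriv M) ω := fun ω hω => by
    rw [deriv_deriv_eq_of_hasDerivAt (eventually_of_mem (isOpen_Ioo.mem_nhds hω) hM')
      ((hasDerivAt_massProfileDeriv hp (hdom ω hω).1 (hdom ω hω).2).const_mul K)]
    exact mul_pos hK (massProfileDeriv2_pos hp ha (hdom ω hω).1 (hdom ω hω).2)
  refine ⟨strictConvexOn_of_deriv2_pos (convex_Ioo _ _)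
    (fun ω hω => (hM' ω hω).continuousAt.continuousWithinAt) ?_, hM''⟩
  rw [interior_Ioo]
  exact hM''
end

section
/- Let α > 2 be a natural number. Then the derivative M'(ω) of the one-dimensional solitary wave mass vanishes at exactly one point ω_c ∈ (0, ω*), M' is negative on (0, ω_c) and positive on (ω_c, ω*). -/
/-
Write `q = 1/α`, `b = α + 1 = 1/ω*` and `J q p c = ∫₀^∞ (1+z²)^(-q) (c+z²)^(-p) dz`, so
that `M ω = C ω^(q-1/2) G ω` with `G ω = J q (1/2) (1 - bω)`. Differentiating under the
integral sign, `M' ω = C ω^(q-3/2) h ω` with `h = (q - 1/2) G + ω G'`, and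
`h' = (q + 1/2) G' + ω G'' > 0`, so `h` is strictly increasing on `(0, ω*)`. Since `α > 2`,
`h 0 = (q - 1/2) J q (1/2) 1 < 0`; near `ω*`, with `c = 1 - bω`, `G' ≍ 1/c` dominates
`G = O(c^(-1/2))`, so `h > 0` there. The intermediate value theorem gives the unique zero
`ω_c` of `h`, and `M'` has the sign of `h`.
-/

open Real MeasureTheory Set

theorem mul_lt_one_of_lt_inv {b ω : ℝ} (hb : 0 < b) (hω : ω < b⁻¹) : b * ω < 1 := by
  simpa using (lt_inv_mul_iff₀ hb).mp (by simpa using hω)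

theorem exists_unique_sign_change_of_strictMonoOn {f g D : ℝ → ℝ} {l r : ℝ}
    (hmono : StrictMonoOn g (Ioo l r)) (hcont : ContinuousOn g (Ioo l r))
    (hneg : ∃ x ∈ Ioo l r, g x < 0) (hpos : ∃ x ∈ Ioo l r, 0 < g x)
    (hf : ∀ x ∈ Ioo l r, 0 < f x) (hD : ∀ x ∈ Ioo l r, D x = f x * g x) :
    ∃ c ∈ Ioo l r, D c = 0 ∧ (∀ x ∈ Ioo l c, D x < 0) ∧ (∀ x ∈ Ioo c r, 0 < D x) ∧
      ∀ x ∈ Ioo l r, D x = 0 → x = c := by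
  obtain ⟨x₁, hx₁, hg₁⟩ := hneg
  obtain ⟨x₂, hx₂, hg₂⟩ := hpos
  have hx₁₂ : x₁ < x₂ := (hmono.lt_iff_lt hx₁ hx₂).mp (hg₁.trans hg₂)
  have hsub : Icc x₁ x₂ ⊆ Ioo l r := Icc_subset_Ioo hx₁.1 hx₂.2
  obtain ⟨c, hc, hgc⟩ := intermediate_value_Ioo hx₁₂.le (hcont.mono hsub) ⟨hg₁, hg₂⟩
  have hcmem : c ∈ Ioo l r := hsub (Ioo_subset_Icc_self hc)
  refine ⟨c, hcmem, by rw [hD c hcmem, hgc, mul_zero], fun x hx => ?_, fun x hx => ?_,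
    fun x hx hDx => ?_⟩
  · have hxmem : x ∈ Ioo l r := ⟨hx.1, hx.2.trans hcmem.2⟩
    rw [hD x hxmem]
    exact mul_neg_of_pos_of_neg (hf x hxmem) (hgc ▸ hmono hxmem hcmem hx.2)
  · have hxmem : x ∈ Ioo l r := ⟨hcmem.1.trans hx.1, hx.2⟩
    rw [hD x hxmem]
    exact mul_pos (hf x hxmem) (hgc ▸ hmono hcmem hxmem hx.1)
  · rw [hD x hx] at hDx
    exact hmono.injOn hx hcmem
      (((mul_eq_zero.mp hDx).resolve_left (hf x hx).ne').trans hgc.symm)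

namespace SolitaryWave

noncomputable def J (q p c : ℝ) : ℝ :=
  ∫ z in Ioi (0 : ℝ), (1 + z ^ 2) ^ (-q) * (c + z ^ 2) ^ (-p)

variable {q p c : ℝ}

theorem continuous_J_integrand (hc : 0 < c) :
    Continuous fun z : ℝ => (1 + z ^ 2) ^ (-q) * (c + z ^ 2) ^ (-p) :=
  ((by fun_prop : Continuous fun z : ℝ => 1 + z ^ 2).rpow_const
      fun _ => Or.inl (by positivity)).mul
    ((by fun_prop : Continuous fun z : ℝ => c + z ^ 2).rpow_const
      fun _ => Or.inl (by positivity))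

theorem J_integrand_le_rpow (hq : 0 ≤ q) (hp : 0 ≤ p) (hc : 0 ≤ c) {z : ℝ} (hz : 0 < z) :
    (1 + z ^ 2) ^ (-q) * (c + z ^ 2) ^ (-p) ≤ z ^ (-(2 * (q + p))) :=
  calc (1 + z ^ 2) ^ (-q) * (c + z ^ 2) ^ (-p) ≤ (z ^ 2) ^ (-q) * (z ^ 2) ^ (-p) :=
        mul_le_mul (rpow_le_rpow_of_nonpos (by positivity) (by linarith) (by linarith))
          (rpow_le_rpow_of_nonpos (by positivity) (by linarith) (by linarith))
          (by positivity) (by positivity)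
    _ = z ^ (-(2 * (q + p))) := by
        rw [← rpow_add (by positivity), ← rpow_natCast, ← rpow_mul hz.le]
        ring_nf

theorem integrableOn_J_integrand (hq : 0 ≤ q) (hp : 0 ≤ p) (hqp : 1 < 2 * (q + p))
    (hc : 0 < c) :
    IntegrableOn (fun z : ℝ => (1 + z ^ 2) ^ (-q) * (c + z ^ 2) ^ (-p)) (Ioi 0) := by
  rw [← Ioc_union_Ioi_eq_Ioi zero_le_one, integrableOn_union]
  refine ⟨(continuous_J_integrand hc).integrableOn_Icc.mono_set Ioc_subset_Icc_self, ?_⟩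
  refine (integrableOn_Ioi_rpow_of_lt (by linarith : -(2 * (q + p)) < -1) one_pos).mono'
    (continuous_J_integrand hc).aestronglyMeasurable.restrict ?_
  filter_upwards [ae_restrict_mem measurableSet_Ioi] with z (hz : 1 < z)
  rw [norm_of_nonneg (by positivity)]
  exact J_integrand_le_rpow hq hp hc.le (one_pos.trans hz)

theorem J_pos (hq : 0 ≤ q) (hp : 0 ≤ p) (hqp : 1 < 2 * (q + p)) (hc : 0 < c) :
    0 < J q p c := by
  refine (setIntegral_pos_iff_support_of_nonneg_ae (Filter.Eventually.of_forall fun z => ?_)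
    (integrableOn_J_integrand hq hp hqp hc)).mpr ?_
  · positivity
  · have hsupp :
        Function.support (fun z : ℝ => (1 + z ^ 2) ^ (-q) * (c + z ^ 2) ^ (-p)) = univ :=
      eq_univ_of_forall fun z => (by positivity : (1 + z ^ 2) ^ (-q) * (c + z ^ 2) ^ (-p) ≠ 0)
    simp [hsupp]

theorem hasDerivAt_J (hq : 0 ≤ q) (hp : 0 ≤ p) (hqp : 1 < 2 * (q + p)) (hc : 0 < c) :
    HasDerivAt (J q p) (-p * J q (p + 1) c) c := by
  have hc2 : 0 < c / 2 := half_pos hc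
  have hball : ∀ x ∈ Metric.ball c (c / 2), c / 2 < x := fun x hx => by
    linarith [(abs_lt.mp (mem_ball_iff_norm.mp hx)).1]
  have key := hasDerivAt_integral_of_dominated_loc_of_deriv_le
    (μ := volume.restrict (Ioi (0 : ℝ))) (x₀ := c) (Metric.ball_mem_nhds c hc2)
    (F := fun x z => (1 + z ^ 2) ^ (-q) * (x + z ^ 2) ^ (-p))
    (F' := fun x z => (1 + z ^ 2) ^ (-q) * (-p * (x + z ^ 2) ^ (-(p + 1))))
    (bound := fun z => p * ((1 + z ^ 2) ^ (-q) * (c / 2 + z ^ 2) ^ (-(p + 1))))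
    (Filter.eventually_of_mem (Metric.ball_mem_nhds c hc2) fun x hx =>
      (continuous_J_integrand (hc2.trans (hball x hx))).aestronglyMeasurable.restrict)
    (integrableOn_J_integrand hq hp hqp hc)
    ((continuous_J_integrand hc).aestronglyMeasurable.restrict.const_mul (-p) |>.congr
      (Filter.Eventually.of_forall fun z => by ring))
    (Filter.Eventually.of_forall fun z x hx => by
      have hx' := hball x hx
      have hx0 : 0 < x := hc2.trans hx'
      have hle : (x + z ^ 2) ^ (-(p + 1)) ≤ (c / 2 + z ^ 2) ^ (-(p + 1)) :=
        rpow_le_rpow_of_nonpos (by positivity) (by linarith) (by linarith)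
      rw [norm_mul, norm_mul, norm_neg, norm_of_nonneg hp, norm_of_nonneg (by positivity),
        norm_of_nonneg (by positivity), mul_left_comm]
      exact mul_le_mul_of_nonneg_left (mul_le_mul_of_nonneg_left hle (by positivity)) hp)
    ((integrableOn_J_integrand hq (by linarith) (by linarith) hc2).const_mul p)
    (Filter.Eventually.of_forall fun z x hx => by
      have hx0 : 0 < x := hc2.trans (hball x hx)
      have := ((hasDerivAt_id x).add_const (z ^ 2)).rpow_const (p := -p) (Or.inl (by positivity))
      refine (this.const_mul ((1 + z ^ 2) ^ (-q))).congr_deriv ?_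
      rw [show -p - 1 = -(p + 1) by ring, id]
      ring)
  refine key.2.congr_deriv ?_
  rw [J, ← integral_const_mul]
  exact integral_congr_ae (Filter.Eventually.of_forall fun z => by ring)

variable {t : ℝ}

theorem J_one_half_sq_le (hq : 0 < q) (ht : 0 < t) :
    J q (1 / 2) (t ^ 2) ≤ t⁻¹ + (2 * q)⁻¹ := by
  have hint := integrableOn_J_integrand hq.le (p := 1 / 2) (by norm_num) (by linarith)
    (pow_pos ht 2)
  rw [J, ← Ioc_union_Ioi_eq_Ioi zero_le_one, setIntegral_union Ioc_disjoint_Ioi_same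
    measurableSet_Ioi (hint.mono_set Ioc_subset_Ioi_self)
    (hint.mono_set (Ioi_subset_Ioi zero_le_one))]
  gcongr
  · have hsqrt : (t ^ 2) ^ (-(1 / 2 : ℝ)) = t⁻¹ := by
      rw [rpow_neg (by positivity), ← sqrt_eq_rpow, sqrt_sq ht.le]
    have hbound : ∀ z ∈ Ioc (0 : ℝ) 1,
        (1 + z ^ 2) ^ (-q) * (t ^ 2 + z ^ 2) ^ (-(1 / 2 : ℝ)) ≤ t⁻¹ := fun z _ =>
      calc (1 + z ^ 2) ^ (-q) * (t ^ 2 + z ^ 2) ^ (-(1 / 2 : ℝ))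
          ≤ 1 * (t ^ 2) ^ (-(1 / 2 : ℝ)) :=
            mul_le_mul (rpow_le_one_of_one_le_of_nonpos (by nlinarith) (by linarith))
              (rpow_le_rpow_of_nonpos (by positivity) (by nlinarith) (by norm_num))
              (by positivity) zero_le_one
        _ = t⁻¹ := by rw [one_mul, hsqrt]
    calc _ ≤ ∫ _ in Ioc (0 : ℝ) 1, t⁻¹ :=
          setIntegral_mono_on (hint.mono_set Ioc_subset_Ioi_self)
            (integrableOn_const measure_Ioc_lt_top.ne) measurableSet_Ioc hbound
      _ = t⁻¹ := by simp [volume_real_Ioc_of_le zero_le_one]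
  · calc _ ≤ ∫ z in Ioi (1 : ℝ), z ^ (-(2 * (q + 1 / 2))) :=
          setIntegral_mono_on (hint.mono_set (Ioi_subset_Ioi zero_le_one))
            (integrableOn_Ioi_rpow_of_lt (by linarith) one_pos) measurableSet_Ioi
            fun z hz => J_integrand_le_rpow hq.le (by norm_num) (by positivity) (one_pos.trans hz)
      _ = (2 * q)⁻¹ := by
          rw [integral_Ioi_rpow_of_lt (by linarith) one_pos, one_rpow]
          field_simp
          ring

theorem inv_three_mul_cube_le_rpow_neg_three_halves (ht : 0 < t) {x : ℝ} (hx : 0 < x)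
    (hxt : x ≤ 2 * t ^ 2) : (3 * t ^ 3)⁻¹ ≤ x ^ (-(3 / 2 : ℝ)) := by
  have hsqrt_two : √2 ≤ 3 / 2 := sqrt_le_iff.mpr ⟨by norm_num, by norm_num⟩
  have htwo : (2 : ℝ) ^ (3 / 2 : ℝ) ≤ 3 := by
    rw [show (3 / 2 : ℝ) = 1 + 1 / 2 by norm_num, rpow_add two_pos, rpow_one, ← sqrt_eq_rpow]
    linarith
  have hpow : (2 * t ^ 2) ^ (3 / 2 : ℝ) ≤ 3 * t ^ 3 := by
    rw [mul_rpow zero_le_two (by positivity), ← rpow_natCast, ← rpow_mul ht.le]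
    norm_num
    exact mul_le_mul_of_nonneg_right htwo (by positivity)
  rw [rpow_neg hx.le]
  exact inv_anti₀ (by positivity) ((rpow_le_rpow hx.le hxt (by norm_num)).trans hpow)

theorem inv_six_mul_sq_le_J_three_halves_sq (hq : 0 ≤ q) (hq1 : q ≤ 1) (ht : 0 < t)
    (ht1 : t ≤ 1) : (6 * t ^ 2)⁻¹ ≤ J q (3 / 2) (t ^ 2) := by
  have hint := integrableOn_J_integrand hq (p := 3 / 2) (by norm_num) (by linarith) (pow_pos ht 2)
  have hbound : ∀ z ∈ Ioc 0 t,
      (6 * t ^ 3)⁻¹ ≤ (1 + z ^ 2) ^ (-q) * (t ^ 2 + z ^ 2) ^ (-(3 / 2 : ℝ)) := by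
    rintro z ⟨hz0, hzt⟩
    have hz2 : z ^ 2 ≤ t ^ 2 := pow_le_pow_left₀ hz0.le hzt 2
    have hweight : (2 : ℝ)⁻¹ ≤ (1 + z ^ 2) ^ (-q) :=
      calc (2 : ℝ)⁻¹ ≤ (1 + z ^ 2)⁻¹ := inv_anti₀ (by positivity) (by nlinarith)
        _ = (1 + z ^ 2) ^ (-1 : ℝ) := (rpow_neg_one _).symm
        _ ≤ (1 + z ^ 2) ^ (-q) := rpow_le_rpow_of_exponent_le (by nlinarith) (by linarith)
    calc (6 * t ^ 3)⁻¹ = 2⁻¹ * (3 * t ^ 3)⁻¹ := by ring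
      _ ≤ _ := mul_le_mul hweight
          (inv_three_mul_cube_le_rpow_neg_three_halves ht (by positivity) (by linarith))
          (by positivity) (by positivity)
  calc (6 * t ^ 2)⁻¹ = (6 * t ^ 3)⁻¹ * volume.real (Ioc 0 t) := by
        rw [volume_real_Ioc_of_le ht.le, sub_zero]
        field_simp
    _ ≤ ∫ z in Ioc 0 t, (1 + z ^ 2) ^ (-q) * (t ^ 2 + z ^ 2) ^ (-(3 / 2 : ℝ)) :=
        setIntegral_ge_of_const_le_real measurableSet_Ioc measure_Ioc_lt_top.ne hbound
          (hint.mono_set Ioc_subset_Ioi_self)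
    _ ≤ J q (3 / 2) (t ^ 2) :=
        setIntegral_mono_set hint (Filter.Eventually.of_forall fun z => by positivity)
          Ioc_subset_Ioi_self.eventuallyLE

variable {b ω : ℝ}

theorem hasDerivAt_J_affine (hq : 0 ≤ q) (hp : 0 ≤ p) (hqp : 1 < 2 * (q + p))
    (hω : b * ω < 1) :
    HasDerivAt (fun x => J q p (1 - b * x)) (p * b * J q (p + 1) (1 - b * ω)) ω := by
  have := (hasDerivAt_J hq hp hqp (sub_pos.mpr hω)).comp ω
    (((hasDerivAt_id ω).const_mul b).const_sub 1)
  exact this.congr_deriv (by ring)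

noncomputable def massDerivFactor (q b ω : ℝ) : ℝ :=
  (q - 1 / 2) * J q (1 / 2) (1 - b * ω) + ω * (b / 2 * J q (3 / 2) (1 - b * ω))

theorem hasDerivAt_massDerivFactor (hq : 0 < q) (hω : b * ω < 1) :
    HasDerivAt (massDerivFactor q b)
      ((q + 1 / 2) * (b / 2 * J q (3 / 2) (1 - b * ω)) +
        ω * (3 * b ^ 2 / 4 * J q (5 / 2) (1 - b * ω))) ω := by
  have hG := hasDerivAt_J_affine (p := 1 / 2) hq.le (by norm_num) (by linarith) hω
  have hG' := hasDerivAt_J_affine (p := 3 / 2) hq.le (by norm_num) (by linarith) hω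
  norm_num at hG hG'
  exact ((hG.const_mul (q - 1 / 2)).add
    ((hasDerivAt_id ω).mul (hG'.const_mul (b / 2)))).congr_deriv (by simp only [id]; ring)

theorem continuousOn_massDerivFactor (hq : 0 < q) (hb : 0 < b) :
    ContinuousOn (massDerivFactor q b) (Ioo 0 b⁻¹) := fun _ hω =>
  (hasDerivAt_massDerivFactor hq (mul_lt_one_of_lt_inv hb hω.2)).continuousAt.continuousWithinAt

theorem strictMonoOn_massDerivFactor (hq : 0 < q) (hb : 0 < b) :
    StrictMonoOn (massDerivFactor q b) (Ioo 0 b⁻¹) := by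
  refine strictMonoOn_of_deriv_pos (convex_Ioo 0 b⁻¹) (continuousOn_massDerivFactor hq hb) ?_
  rw [interior_Ioo]
  intro ω ⟨hω0, hω⟩
  have hbω := mul_lt_one_of_lt_inv hb hω
  have h3 := J_pos hq.le (p := 3 / 2) (by norm_num) (by linarith) (sub_pos.mpr hbω)
  have h5 := J_pos hq.le (p := 5 / 2) (by norm_num) (by linarith) (sub_pos.mpr hbω)
  rw [(hasDerivAt_massDerivFactor hq hbω).deriv]
  positivity

theorem exists_massDerivFactor_neg (hq : 0 < q) (hq2 : q < 1 / 2) (hb : 0 < b) :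
    ∃ ω ∈ Ioo 0 b⁻¹, massDerivFactor q b ω < 0 := by
  have hzero : massDerivFactor q b 0 < 0 := by
    have := J_pos hq.le (p := 1 / 2) (by norm_num) (by linarith) one_pos
    simp only [massDerivFactor, mul_zero, sub_zero, zero_mul, add_zero]
    nlinarith
  have hcont := (hasDerivAt_massDerivFactor hq (b := b) (ω := 0) (by simp)).continuousAt
  exact ((hcont.eventually_lt continuousAt_const hzero).filter_mono nhdsWithin_le_nhds |>.and
    (Ioo_mem_nhdsGT (inv_pos.mpr hb))).exists.imp fun _ h => ⟨h.2, h.1⟩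

theorem exists_massDerivFactor_pos (hq : 0 < q) (hq1 : q ≤ 1) (hb : 0 < b) :
    ∃ ω ∈ Ioo 0 b⁻¹, 0 < massDerivFactor q b ω := by
  -- at `1 - bω = t²`, `J q (3/2) ≥ t⁻² / 6` beats `J q (1/2) ≤ t⁻¹ + (2q)⁻¹` for `t ≤ q / 16`
  set t := q / 16 with ht_def
  have ht : 0 < t := by positivity
  have ht1 : t ≤ 1 / 16 := by linarith
  have ht2 : t ^ 2 < 1 := by nlinarith
  refine ⟨(1 - t ^ 2) / b, ⟨div_pos (by linarith) hb, ?_⟩, ?_⟩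
  · rw [div_lt_iff₀ hb, inv_mul_cancel₀ hb.ne']
    nlinarith
  have hc : 1 - b * ((1 - t ^ 2) / b) = t ^ 2 := by field_simp; ring
  have hcoef : (1 - t ^ 2) / b * (b / 2) = (1 - t ^ 2) / 2 := by field_simp
  rw [massDerivFactor, hc, ← mul_assoc, hcoef]
  have hG := J_one_half_sq_le hq ht
  have hG0 := J_pos hq.le (p := 1 / 2) (by norm_num) (by linarith) (pow_pos ht 2)
  have hG' := inv_six_mul_sq_le_J_three_halves_sq hq.le hq1 ht (by linarith)
  have hu : 16 ≤ t⁻¹ := by rw [le_inv_comm₀ (by norm_num) ht]; linarith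
  rw [show (2 * q)⁻¹ = t⁻¹ / 32 by rw [ht_def]; field_simp; ring] at hG
  rw [show (6 * t ^ 2)⁻¹ = t⁻¹ ^ 2 / 6 by field_simp] at hG'
  have hfirst : -((t⁻¹ + t⁻¹ / 32) / 2) ≤ (q - 1 / 2) * J q (1 / 2) (t ^ 2) := by nlinarith
  have hsecond : 255 / 512 * (t⁻¹ ^ 2 / 6) ≤ (1 - t ^ 2) / 2 * J q (3 / 2) (t ^ 2) :=
    mul_le_mul (by nlinarith) hG' (by positivity) (by linarith)
  nlinarith

theorem hasDerivAt_rpow_mul_J (hq : 0 < q) (hω0 : 0 < ω) (hω : b * ω < 1) :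
    HasDerivAt (fun x => x ^ (q - 1 / 2) * J q (1 / 2) (1 - b * x))
      (ω ^ (q - 3 / 2) * massDerivFactor q b ω) ω := by
  have hG := hasDerivAt_J_affine (p := 1 / 2) hq.le (by norm_num) (by linarith) hω
  norm_num at hG
  refine ((hasDerivAt_rpow_const (p := q - 1 / 2) (Or.inl hω0.ne')).mul hG).congr_deriv ?_
  rw [massDerivFactor, show q - 1 / 2 = q - 3 / 2 + 1 by ring, rpow_add_one hω0.ne',
    show q - 3 / 2 + 1 - 1 = q - 3 / 2 by ring]
  ring

end SolitaryWave

open SolitaryWave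

theorem stmt16 (α : ℕ) (hα : 2 < α) (M : ℝ → ℝ)
    (hM : ∀ ω : ℝ, M ω =
      (2 / (α : ℝ)) * ω ^ (1 / (α : ℝ) - 1 / 2) * (1 / ((α : ℝ) + 1)) ^ (-(1 / (α : ℝ))) *
        ∫ z in Set.Ioi (0 : ℝ),
          (1 + z ^ 2) ^ (-(1 / (α : ℝ))) *
            ((1 - ω / (1 / ((α : ℝ) + 1))) + z ^ 2) ^ (-(1 / 2 : ℝ))) :
    ∃ ωc ∈ Set.Ioo (0 : ℝ) (1 / ((α : ℝ) + 1)),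
      deriv M ωc = 0 ∧
      (∀ ω ∈ Set.Ioo (0 : ℝ) ωc, deriv M ω < 0) ∧
      (∀ ω ∈ Set.Ioo ωc (1 / ((α : ℝ) + 1)), 0 < deriv M ω) ∧
      ∀ ω ∈ Set.Ioo (0 : ℝ) (1 / ((α : ℝ) + 1)), deriv M ω = 0 → ω = ωc := by
  have hα' : (2 : ℝ) < α := by exact_mod_cast hα
  have hb : (0 : ℝ) < α + 1 := by linarith
  have hq : (0 : ℝ) < 1 / α := by positivity
  have hq2 : 1 / (α : ℝ) < 1 / 2 := one_div_lt_one_div_of_lt two_pos hα'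
  set C : ℝ := 2 / α * (1 / ((α : ℝ) + 1)) ^ (-(1 / (α : ℝ)))
  have hMJ : M = fun ω =>
      C * (ω ^ (1 / (α : ℝ) - 1 / 2) * J (1 / α) (1 / 2) (1 - (α + 1) * ω)) := by
    funext ω
    rw [hM, J, div_div_eq_mul_div, div_one, mul_comm ω]
    ring
  have hD : ∀ ω ∈ Ioo 0 ((α : ℝ) + 1)⁻¹,
      deriv M ω = C * ω ^ (1 / (α : ℝ) - 3 / 2) * massDerivFactor (1 / α) (α + 1) ω :=
    fun ω hω => by
      rw [hMJ, mul_assoc]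
      exact ((hasDerivAt_rpow_mul_J hq hω.1 (mul_lt_one_of_lt_inv hb hω.2)).const_mul C).deriv
  rw [one_div ((α : ℝ) + 1)]
  exact exists_unique_sign_change_of_strictMonoOn (strictMonoOn_massDerivFactor hq hb)
    (continuousOn_massDerivFactor hq hb) (exists_massDerivFactor_neg hq hq2 hb)
    (exists_massDerivFactor_pos hq (by linarith) hb)
    (fun ω ⟨hω0, _⟩ => by positivity) hD
end
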